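/- arXiv:2306.14458 — 10 statements merged into one kernel-verified Lean document; each statement's English description precedes it below -/
import Mathlib

section
/- Let S_cl = (1/4)(I₂⊗I₂ + n₃ σ₃⊗I₂ + s₃ I₂⊗σ₃ + t₃₃ σ₃⊗σ₃) be positive semidefinite with n₃, s₃, t₃₃ real and |n₃| < 1, |s₃| < 1. Then for every pair of dichotomic observables A and B, |Cor_{S_cl}(A,B)| ≤ |t₃₃ − n₃s₃| / √((1 − n₃²)(1 − s₃²)), and this bound is attained: Cor_{S_cl}(σ₃, σ₃) = (t₃₃ − n₃s₃)/√((1 − n₃²)(1 − s₃²)). -/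
open Matrix Complex
open scoped Kronecker ComplexConjugate ComplexOrder

noncomputable section

abbrev M2 : Type := Matrix (Fin 2) (Fin 2) ℂ
abbrev M4 : Type := Matrix (Fin 2 × Fin 2) (Fin 2 × Fin 2) ℂ

/-- Pauli matrix σ₁. -/
def σ1 : M2 := !![0, 1; 1, 0]
/-- Pauli matrix σ₂. -/
def σ2 : M2 := !![0, -Complex.I; Complex.I, 0]
/-- Pauli matrix σ₃. -/
def σ3 : M2 := !![1, 0; 0, -1]

/-- The Pauli triple (σ₁, σ₂, σ₃). -/
def pauli : Fin 3 → M2 := ![σ1, σ2, σ3]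

/-- A dichotomic observable: Hermitian, squares to the identity, traceless. -/
def Dichotomic (A : M2) : Prop := A.IsHermitian ∧ A * A = 1 ∧ A.trace = 0

/-- A complementary triple of dichotomic observables. -/
def ComplementaryTriple (X : Fin 3 → M2) : Prop :=
  (∀ i, Dichotomic (X i)) ∧ ∀ i j, i ≠ j → (X i * X j).trace = 0

/-- Expectation value E_S(A ⊗ B) = tr(S·(A⊗B)) (its real part; it is real for states and
Hermitian observables). -/
def EE (S : M4) (A B : M2) : ℝ := (Matrix.trace (S * (A ⊗ₖ B))).re

/-- Covariance of A and B in the state S. -/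
def Cov (S : M4) (A B : M2) : ℝ := EE S A B - EE S A 1 * EE S 1 B

/-- Variance of a dichotomic observable A measured on the first subsystem. -/
def Var1 (S : M4) (A : M2) : ℝ := 1 - (EE S A 1) ^ 2
/-- Variance of a dichotomic observable B measured on the second subsystem. -/
def Var2 (S : M4) (B : M2) : ℝ := 1 - (EE S 1 B) ^ 2

/-- The Pearson correlation coefficient of observables A and B in the state S. -/
def Cor (S : M4) (A B : M2) : ℝ := Cov S A B / Real.sqrt (Var1 S A * Var2 S B)

lemma trace_sig3_mul (A : M2) : (σ3 * A).trace = A 0 0 - A 1 1 := by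
  simp [Matrix.trace_fin_two, Matrix.mul_apply, Fin.sum_univ_two, σ3, Matrix.vecMul,
    dotProduct, sub_eq_add_neg]

lemma sig3_mul_sig3 : σ3 * σ3 = (1 : M2) := by
  ext i j; fin_cases i <;> fin_cases j <;>
    simp [σ3, Matrix.mul_apply, Fin.sum_univ_two, Matrix.one_apply]

lemma EE_formula (n3 s3 t33 : ℝ) (Scl : M4)
    (hform : Scl = (1/4 : ℂ) • ((1 : M2) ⊗ₖ (1 : M2)
      + (n3 : ℂ) • (σ3 ⊗ₖ (1 : M2)) + (s3 : ℂ) • ((1 : M2) ⊗ₖ σ3) + (t33 : ℂ) • (σ3 ⊗ₖ σ3)))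
    (A B : M2) :
    EE Scl A B = ((1/4 : ℂ) * (A.trace * B.trace + (n3 : ℂ) * ((σ3 * A).trace * B.trace)
      + (s3 : ℂ) * (A.trace * ((σ3 * B).trace))
      + (t33 : ℂ) * ((σ3 * A).trace * (σ3 * B).trace))).re := by
  subst hform
  unfold EE
  simp only [smul_mul_assoc, add_mul, Matrix.trace_add, Matrix.trace_smul,
    ← Matrix.mul_kronecker_mul, Matrix.trace_kronecker, Matrix.one_mul, smul_eq_mul]

/-- extraction of the z-component of a dichotomic observable -/
lemma dich_extract (A : M2) (hA : Dichotomic A) :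
    ∃ a : ℝ, a ^ 2 ≤ 1 ∧ A.trace = 0 ∧ (σ3 * A).trace = (2 * a : ℝ) := by
  obtain ⟨hherm, hsq, htr⟩ := hA
  have h00 : (starRingEnd ℂ) (A 0 0) = A 0 0 := by
    have := congrFun (congrFun hherm 0) 0
    simpa [Matrix.conjTranspose_apply] using this
  have h10 : A 1 0 = (starRingEnd ℂ) (A 0 1) := by
    have := congrFun (congrFun hherm 1) 0
    simpa [Matrix.conjTranspose_apply] using this.symm
  set a : ℝ := (A 0 0).re with ha
  have hA00 : A 0 0 = (a : ℂ) := by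
    rw [Complex.conj_eq_iff_re] at h00
    exact h00.symm
  have hA11 : A 1 1 = -(a : ℂ) := by
    have h2 : A 0 0 + A 1 1 = 0 := by simpa [Matrix.trace_fin_two] using htr
    rw [hA00] at h2; linear_combination h2
  have hsq00 : A 0 0 * A 0 0 + A 0 1 * A 1 0 = 1 := by
    have := congrFun (congrFun hsq 0) 0
    simpa [Matrix.mul_apply, Fin.sum_univ_two, Matrix.one_apply] using this
  have hnorm : a ^ 2 + Complex.normSq (A 0 1) = 1 := by
    rw [hA00, h10, Complex.mul_conj] at hsq00
    have := congrArg Complex.re hsq00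
    simpa [pow_two] using this
  refine ⟨a, by nlinarith [Complex.normSq_nonneg (A 0 1)], htr, ?_⟩
  rw [trace_sig3_mul, hA00, hA11]
  push_cast; ring

lemma core_ineq (n s t a b : ℝ) (hn : |n| < 1) (hs : |s| < 1)
    (ha : a ^ 2 ≤ 1) (hb : b ^ 2 ≤ 1) :
    |(t * (a * b) - n * a * (s * b)) / Real.sqrt ((1 - (n * a) ^ 2) * (1 - (s * b) ^ 2))| ≤
      |t - n * s| / Real.sqrt ((1 - n ^ 2) * (1 - s ^ 2)) := by
  have hn2 : 0 < 1 - n ^ 2 := by nlinarith [abs_lt.mp hn]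
  have hs2 : 0 < 1 - s ^ 2 := by nlinarith [abs_lt.mp hs]
  have hna : 0 < 1 - (n * a) ^ 2 := by nlinarith
  have hsb : 0 < 1 - (s * b) ^ 2 := by nlinarith
  have hP : 0 < Real.sqrt ((1 - n ^ 2) * (1 - s ^ 2)) :=
    Real.sqrt_pos.mpr (by positivity)
  have hD : 0 < Real.sqrt ((1 - (n * a) ^ 2) * (1 - (s * b) ^ 2)) :=
    Real.sqrt_pos.mpr (by positivity)
  rw [abs_div, abs_of_pos hD, div_le_div_iff₀ hD hP]
  have hnum : |t * (a * b) - n * a * (s * b)| = |a * b| * |t - n * s| := by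
    rw [← abs_mul]; ring_nf
  rw [hnum]
  have key : |a * b| * Real.sqrt ((1 - n ^ 2) * (1 - s ^ 2)) ≤
      Real.sqrt ((1 - (n * a) ^ 2) * (1 - (s * b) ^ 2)) := by
    have h1 : |a * b| = Real.sqrt ((a * b) ^ 2) := (Real.sqrt_sq_eq_abs _).symm
    rw [h1, ← Real.sqrt_mul (sq_nonneg _)]
    apply Real.sqrt_le_sqrt
    have e1 : a ^ 2 * (1 - n ^ 2) ≤ 1 - (n * a) ^ 2 := by nlinarith
    have e2 : b ^ 2 * (1 - s ^ 2) ≤ 1 - (s * b) ^ 2 := by nlinarith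
    calc (a * b) ^ 2 * ((1 - n ^ 2) * (1 - s ^ 2))
        = (a ^ 2 * (1 - n ^ 2)) * (b ^ 2 * (1 - s ^ 2)) := by ring
      _ ≤ (1 - (n * a) ^ 2) * (1 - (s * b) ^ 2) :=
          mul_le_mul e1 e2 (by positivity) (le_of_lt hna)
  calc |a * b| * |t - n * s| * Real.sqrt ((1 - n ^ 2) * (1 - s ^ 2))
      = |t - n * s| * (|a * b| * Real.sqrt ((1 - n ^ 2) * (1 - s ^ 2))) := by ring
    _ ≤ |t - n * s| * Real.sqrt ((1 - (n * a) ^ 2) * (1 - (s * b) ^ 2)) :=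
        mul_le_mul_of_nonneg_left key (abs_nonneg _)

/-- for the diagonal classically correlated state, the PCC of any pair of
dichotomic observables is bounded by `|t₃₃ − n₃s₃| / √((1−n₃²)(1−s₃²))`, with equality
attained by the pair (σ₃, σ₃). -/
theorem classical_state_pcc_bound (n3 s3 t33 : ℝ) (Scl : M4)
    (hform : Scl = (1/4 : ℂ) • ((1 : M2) ⊗ₖ (1 : M2)
      + (n3 : ℂ) • (σ3 ⊗ₖ (1 : M2)) + (s3 : ℂ) • ((1 : M2) ⊗ₖ σ3) + (t33 : ℂ) • (σ3 ⊗ₖ σ3)))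
    (hpsd : Scl.PosSemidef) (hn : |n3| < 1) (hs : |s3| < 1) :
    (∀ A B : M2, Dichotomic A → Dichotomic B →
      |Cor Scl A B| ≤ |t33 - n3 * s3| / Real.sqrt ((1 - n3 ^ 2) * (1 - s3 ^ 2))) ∧
    Cor Scl σ3 σ3 = (t33 - n3 * s3) / Real.sqrt ((1 - n3 ^ 2) * (1 - s3 ^ 2)) := by
  have htr1 : (1 : M2).trace = 2 := by simp [Matrix.trace_one]
  have htrσ3 : (σ3 : M2).trace = 0 := by simp [Matrix.trace_fin_two, σ3]
  have htrσ31 : (σ3 * (1 : M2)).trace = 0 := by rw [Matrix.mul_one]; exact htrσ3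
  -- general computations of EE for "nice" A, B
  have hEE : ∀ (A B : M2) (a b : ℝ), A.trace = 0 → B.trace = 0 →
      (σ3 * A).trace = (2 * a : ℝ) → (σ3 * B).trace = (2 * b : ℝ) →
      EE Scl A B = t33 * (a * b) ∧ EE Scl A 1 = n3 * a ∧ EE Scl 1 B = s3 * b := by
    intro A B a b htA htB haA hbB
    refine ⟨?_, ?_, ?_⟩
    · rw [EE_formula n3 s3 t33 Scl hform, htA, htB, haA, hbB,
        show ((1/4 : ℂ) * ((0 : ℂ) * 0 + (n3 : ℂ) * (((2*a : ℝ) : ℂ) * 0)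
          + (s3 : ℂ) * ((0 : ℂ) * ((2*b : ℝ) : ℂ))
          + (t33 : ℂ) * (((2*a : ℝ) : ℂ) * ((2*b : ℝ) : ℂ)))) = ((t33 * (a * b) : ℝ) : ℂ) by
          push_cast; ring, Complex.ofReal_re]
    · rw [EE_formula n3 s3 t33 Scl hform, htA, haA, htr1, htrσ31,
        show ((1/4 : ℂ) * ((0 : ℂ) * 2 + (n3 : ℂ) * (((2*a : ℝ) : ℂ) * 2)
          + (s3 : ℂ) * ((0 : ℂ) * 0)
          + (t33 : ℂ) * (((2*a : ℝ) : ℂ) * 0))) = ((n3 * a : ℝ) : ℂ) by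
          push_cast; ring, Complex.ofReal_re]
    · rw [EE_formula n3 s3 t33 Scl hform, htB, hbB, htr1, htrσ31,
        show ((1/4 : ℂ) * ((2 : ℂ) * 0 + (n3 : ℂ) * ((0 : ℂ) * 0)
          + (s3 : ℂ) * ((2 : ℂ) * ((2*b : ℝ) : ℂ))
          + (t33 : ℂ) * ((0 : ℂ) * ((2*b : ℝ) : ℂ)))) = ((s3 * b : ℝ) : ℂ) by
          push_cast; ring, Complex.ofReal_re]
  have hσ3tr : (σ3 * σ3).trace = (2 * (1 : ℝ) : ℝ) := by
    rw [sig3_mul_sig3]; push_cast; simpa using htr1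
  constructor
  · intro A B hA hB
    obtain ⟨a, ha1, htA, haA⟩ := dich_extract A hA
    obtain ⟨b, hb1, htB, hbB⟩ := dich_extract B hB
    obtain ⟨e1, e2, e3⟩ := hEE A B a b htA htB haA hbB
    have : Cor Scl A B =
        (t33 * (a * b) - n3 * a * (s3 * b)) /
          Real.sqrt ((1 - (n3 * a) ^ 2) * (1 - (s3 * b) ^ 2)) := by
      unfold Cor Cov Var1 Var2
      rw [e1, e2, e3]
    rw [this]
    exact core_ineq n3 s3 t33 a b hn hs ha1 hb1
  · obtain ⟨e1, e2, e3⟩ := hEE σ3 σ3 1 1 htrσ3 htrσ3 (by exact_mod_cast hσ3tr)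
      (by exact_mod_cast hσ3tr)
    unfold Cor Cov Var1 Var2
    rw [e1, e2, e3]
    norm_num
end
end

section
/- Let (A₁, A₂, A₃) and (B₁, B₂, B₃) be complementary triples of dichotomic observables. Then Σ_{i=1}^{3} |tr(Aᵢ·σ₃)·tr(Bᵢ·σ₃)| ≤ 4. -/
open Matrix Complex
open scoped Kronecker ComplexConjugate ComplexOrder

noncomputable section

lemma sum_sq_eq (A : Fin 3 → M2) (hA : ComplementaryTriple A) :
    ∑ i : Fin 3, ((A i * σ3).trace.re)^2 = 4 := by
  obtain ⟨hd, ho⟩ := hA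
  set a : Fin 3 → ℝ := fun i => (A i 0 0).re with ha
  set b : Fin 3 → ℝ := fun i => (A i 0 1).re with hb
  set c : Fin 3 → ℝ := fun i => (A i 0 1).im with hc
  have h00 : ∀ i, A i 0 0 = (a i : ℂ) := by
    intro i
    have h2 : conj (A i 0 0) = A i 0 0 := (hd i).1.apply 0 0
    exact ((Complex.conj_eq_iff_re).1 h2).symm
  have h01 : ∀ i, A i 0 1 = (b i : ℂ) + (c i : ℂ) * Complex.I := by
    intro i; exact (Complex.re_add_im _).symm
  have h10 : ∀ i, A i 1 0 = (b i : ℂ) - (c i : ℂ) * Complex.I := by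
    intro i
    have h2 : conj (A i 0 1) = A i 1 0 := (hd i).1.apply 1 0
    rw [← h2, h01]
    simp [Complex.ext_iff]
  have h11 : ∀ i, A i 1 1 = -(a i : ℂ) := by
    intro i
    have h2 := (hd i).2.2
    rw [Matrix.trace_fin_two] at h2
    rw [← h00 i]; linear_combination h2
  -- diagonal: unit norm
  have h1 : ∀ i, a i ^ 2 + b i ^ 2 + c i ^ 2 = 1 := by
    intro i
    have h := (Matrix.ext_iff.2 (hd i).2.1) 0 0
    rw [Matrix.mul_apply, Fin.sum_univ_two, h00, h01, h10] at h
    simp [Matrix.one_apply] at h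
    have hC : ((a i)^2 + (b i)^2 + (c i)^2 : ℂ) = 1 := by
      linear_combination h + (c i : ℂ)^2 * Complex.I_sq
    exact_mod_cast hC
  -- off-diagonal: orthogonality
  have h2 : ∀ i j, i ≠ j → a i * a j + b i * b j + c i * c j = 0 := by
    intro i j hij
    have h := ho i j hij
    simp only [Matrix.trace_fin_two, Matrix.mul_apply, Fin.sum_univ_two,
      h00, h01, h10, h11] at h
    have hC : ((a i * a j + b i * b j + c i * c j : ℝ) : ℂ) = 0 := by
      push_cast
      linear_combination h / 2 + (c i * c j : ℂ) * Complex.I_sq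
    exact_mod_cast hC
  -- orthogonal matrix
  set M : Matrix (Fin 3) (Fin 3) ℝ := Matrix.of fun i => ![a i, b i, c i] with hM
  have hMMT : M * Mᵀ = 1 := by
    ext i j
    rw [Matrix.mul_apply, Fin.sum_univ_three]
    by_cases hij : i = j
    · subst hij
      simp [hM, Matrix.one_apply]
      have := h1 i; nlinarith [h1 i]
    · simp [hM, Matrix.one_apply, hij]
      have := h2 i j hij; nlinarith [h2 i j hij]
  have hMTM : Mᵀ * M = 1 := mul_eq_one_comm.1 hMMT
  have hcol : a 0 ^ 2 + a 1 ^ 2 + a 2 ^ 2 = 1 := by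
    have h := (Matrix.ext_iff.2 hMTM) 0 0
    rw [Matrix.mul_apply, Fin.sum_univ_three] at h
    simp [hM, Matrix.one_apply] at h
    nlinarith [h]
  -- trace values
  have htr : ∀ i, (A i * σ3).trace.re = 2 * a i := by
    intro i
    simp only [Matrix.trace_fin_two, Matrix.mul_apply, Fin.sum_univ_two,
      h00, h01, h10, h11]
    simp [σ3]
    ring
  rw [Fin.sum_univ_three, htr 0, htr 1, htr 2]
  nlinarith [hcol]

/-- for complementary triples (A₁,A₂,A₃) and (B₁,B₂,B₃) of dichotomic
observables, `Σᵢ |tr(Aᵢ·σ₃)·tr(Bᵢ·σ₃)| ≤ 4`. -/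
theorem cauchy_schwarz_parseval_bound (A B : Fin 3 → M2)
    (hA : ComplementaryTriple A) (hB : ComplementaryTriple B) :
    ∑ i : Fin 3, |((A i * σ3).trace).re * ((B i * σ3).trace).re| ≤ 4 := by
  have hAs := sum_sq_eq A hA
  have hBs := sum_sq_eq B hB
  set f : Fin 3 → ℝ := fun i => |((A i * σ3).trace).re| with hf
  set g : Fin 3 → ℝ := fun i => |((B i * σ3).trace).re| with hg
  have hcs := Finset.sum_mul_sq_le_sq_mul_sq Finset.univ f g
  have hfe : ∑ i : Fin 3, f i ^ 2 = 4 := by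
    simp only [hf, _root_.sq_abs]; exact hAs
  have hge : ∑ i : Fin 3, g i ^ 2 = 4 := by
    simp only [hg, _root_.sq_abs]; exact hBs
  rw [hfe, hge] at hcs
  have heq : ∑ i : Fin 3, |((A i * σ3).trace).re * ((B i * σ3).trace).re|
      = ∑ i : Fin 3, f i * g i := by
    simp [hf, hg, abs_mul]
  rw [heq]
  have hnn : 0 ≤ ∑ i : Fin 3, f i * g i :=
    Finset.sum_nonneg fun i _ => mul_nonneg (abs_nonneg _) (abs_nonneg _)
  nlinarith [hcs, hnn]
end
end

section
/- Let S_cl = (1/4)(I₂⊗I₂ + n₃ σ₃⊗I₂ + s₃ I₂⊗σ₃ + t₃₃ σ₃⊗σ₃) be positive semidefinite with n₃, s₃, t₃₃ real and |n₃| < 1, |s₃| < 1. Then for every pair of complementary triples (A₁,A₂,A₃) and (B₁,B₂,B₃) of dichotomic observables, Σ_{i=1}^{3} |Cor_{S_cl}(Aᵢ, Bᵢ)| ≤ |t₃₃ − n₃s₃| / √((1 − n₃²)(1 − s₃²)); moreover this bound is attained by the triples Aᵢ = Bᵢ = σᵢ (i = 1,2,3). In other words, the total correlations of a diagonal classically correlated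 two-qubit state can be concentrated in the single pair of observables (σ₃, σ₃). -/
open Matrix Complex
open scoped Kronecker ComplexConjugate ComplexOrder

noncomputable section

lemma dich_facts {A : M2} (hA : Dichotomic A) :
    A 0 0 = ((A 0 0).re : ℂ) ∧ A 1 1 = -((A 0 0).re : ℂ) ∧ A 1 0 = conj (A 0 1) ∧
      ((A 0 0).re)^2 + ((A 0 1).re^2 + (A 0 1).im^2) = 1 := by
  obtain ⟨hH, hSq, hT⟩ := hA
  have h00 : conj (A 0 0) = A 0 0 := by
    conv_rhs => rw [← hH]
    simp [Matrix.conjTranspose_apply]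
  have him : (A 0 0).im = 0 := by
    have h := congrArg Complex.im h00; simp at h; linarith
  have e0 : A 0 0 = ((A 0 0).re : ℂ) := by
    apply Complex.ext <;> simp [him]
  have htr : A 0 0 + A 1 1 = 0 := by
    have := hT; simpa [Matrix.trace, Fin.sum_univ_two, Matrix.diag] using this
  have e1 : A 1 1 = -((A 0 0).re : ℂ) := by rw [← e0]; linear_combination htr
  have e10 : A 1 0 = conj (A 0 1) := by
    conv_lhs => rw [← hH]
    simp [Matrix.conjTranspose_apply]
  have hsq00 : A 0 0 * A 0 0 + A 0 1 * A 1 0 = 1 := by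
    have := congrFun (congrFun hSq 0) 0
    simpa [Matrix.mul_apply, Fin.sum_univ_two, Matrix.one_apply] using this
  refine ⟨e0, e1, e10, ?_⟩
  rw [e0, e10] at hsq00
  have := congrArg Complex.re hsq00
  simp [Complex.mul_re, Complex.ofReal_re, Complex.ofReal_im] at this
  nlinarith [this]

lemma sum_sq_col {A : Fin 3 → M2} (hA : ComplementaryTriple A) :
    ∑ i, ((A i 0 0).re)^2 = 1 := by
  set M : Matrix (Fin 3) (Fin 3) ℝ :=
    Matrix.of fun i j => ![(A i 0 0).re, (A i 0 1).re, (A i 0 1).im] j with hM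
  have h1 : M * Mᵀ = 1 := by
    ext i j
    obtain ⟨ei0, ei1, ei10, eisq⟩ := dich_facts (hA.1 i)
    simp only [Matrix.mul_apply, Matrix.transpose_apply, Fin.sum_univ_three, hM,
      Matrix.of_apply, Matrix.one_apply]
    by_cases h : i = j
    · subst h
      simp only [if_pos rfl]
      simp
      nlinarith [eisq]
    · obtain ⟨ej0, ej1, ej10, ejsq⟩ := dich_facts (hA.1 j)
      have htr := hA.2 i j h
      have : (A i 0 0) * (A j 0 0) + (A i 0 1) * (A j 1 0)
           + ((A i 1 0) * (A j 0 1) + (A i 1 1) * (A j 1 1)) = 0 := by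
        simpa [Matrix.trace, Matrix.diag, Fin.sum_univ_two, Matrix.mul_apply] using htr
      rw [ei0, ei1, ei10, ej0, ej1, ej10] at this
      have hre := congrArg Complex.re this
      simp [Complex.mul_re, Complex.add_re] at hre
      simp only [if_neg h]
      simp
      nlinarith [hre]
  have h2 : Mᵀ * M = 1 := mul_eq_one_comm.mp h1
  have h3 := congrFun (congrFun h2 0) 0
  simp only [Matrix.mul_apply, Matrix.transpose_apply, Fin.sum_univ_three, hM,
    Matrix.of_apply, Matrix.one_apply, if_pos rfl] at h3
  simp [Fin.sum_univ_three]
  simp at h3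
  nlinarith [h3]

section formulas
variable (n3 s3 t33 : ℝ)

def SclF : M4 := (1/4 : ℂ) • ((1 : M2) ⊗ₖ (1 : M2)
      + (n3 : ℂ) • (σ3 ⊗ₖ (1 : M2)) + (s3 : ℂ) • ((1 : M2) ⊗ₖ σ3) + (t33 : ℂ) • (σ3 ⊗ₖ σ3))

variable {A B : M2} {a b : ℝ}
  (hA0 : A 0 0 = (a:ℂ)) (hA1 : A 1 1 = -(a:ℂ)) (hB0 : B 0 0 = (b:ℂ)) (hB1 : B 1 1 = -(b:ℂ))

include hA0 hA1 hB0 hB1 in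
lemma EE_AB : EE (SclF n3 s3 t33) A B = t33 * (a * b) := by
  simp [EE, SclF, Matrix.trace, Matrix.mul_apply, Fintype.sum_prod_type, Fin.sum_univ_two,
    Matrix.kroneckerMap_apply, σ3, Matrix.one_apply, hA0, hA1, hB0, hB1, Matrix.diag]
  ring

include hA0 hA1 in
lemma EE_A1 : EE (SclF n3 s3 t33) A 1 = n3 * a := by
  simp [EE, SclF, Matrix.trace, Matrix.mul_apply, Fintype.sum_prod_type, Fin.sum_univ_two,
    Matrix.kroneckerMap_apply, σ3, Matrix.one_apply, hA0, hA1, Matrix.diag]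
  ring

include hB0 hB1 in
lemma EE_1B : EE (SclF n3 s3 t33) 1 B = s3 * b := by
  simp [EE, SclF, Matrix.trace, Matrix.mul_apply, Fintype.sum_prod_type, Fin.sum_univ_two,
    Matrix.kroneckerMap_apply, σ3, Matrix.one_apply, hB0, hB1, Matrix.diag]
  ring

include hA0 hA1 hB0 hB1 in
lemma Cor_eq : Cor (SclF n3 s3 t33) A B =
    a * b * (t33 - n3 * s3) / Real.sqrt ((1 - n3^2 * a^2) * (1 - s3^2 * b^2)) := by
  rw [Cor, Cov, Var1, Var2, EE_AB n3 s3 t33 hA0 hA1 hB0 hB1, EE_A1 n3 s3 t33 hA0 hA1,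
    EE_1B n3 s3 t33 hB0 hB1]
  rw [show t33 * (a * b) - n3 * a * (s3 * b) = a * b * (t33 - n3 * s3) by ring,
    show (1 - (n3 * a)^2) * (1 - (s3 * b)^2) = (1 - n3^2 * a^2) * (1 - s3^2 * b^2) by ring]

end formulas

lemma term_bound {n s : ℝ} (t a b : ℝ) (hn : |n| < 1) (hs : |s| < 1)
    (ha : a^2 ≤ 1) (hb : b^2 ≤ 1) :
    |a * b * (t - n * s) / Real.sqrt ((1 - n^2 * a^2) * (1 - s^2 * b^2))| ≤
      (|a| * |b|) * (|t - n * s| / Real.sqrt ((1 - n^2) * (1 - s^2))) := by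
  have hn2 : n^2 < 1 := by rwa [sq_lt_one_iff_abs_lt_one]
  have hs2 : s^2 < 1 := by rwa [sq_lt_one_iff_abs_lt_one]
  have hna : n^2 * a^2 ≤ n^2 := mul_le_of_le_one_right (sq_nonneg n) ha
  have hsb : s^2 * b^2 ≤ s^2 := mul_le_of_le_one_right (sq_nonneg s) hb
  have hD2 : (0:ℝ) < (1 - n^2) * (1 - s^2) := by nlinarith
  have hD12 : (1 - n^2) * (1 - s^2) ≤ (1 - n^2 * a^2) * (1 - s^2 * b^2) := by nlinarith
  rw [abs_div, abs_mul, abs_mul, _root_.abs_of_nonneg (Real.sqrt_nonneg _), mul_div_assoc]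
  gcongr |a| * |b| * (|t - n * s| / ?_)
  exact Real.sqrt_le_sqrt hD12

/-- for the diagonal classically correlated state, the sum of absolute PCC's
over any pair of complementary triples is bounded by `|t₃₃ − n₃s₃| / √((1−n₃²)(1−s₃²))`,
and the bound is attained by the Pauli triples Aᵢ = Bᵢ = σᵢ (the correlations concentrate
in the single pair (σ₃, σ₃)). -/
theorem classical_state_total_correlations_concentrate (n3 s3 t33 : ℝ) (Scl : M4)
    (hform : Scl = (1/4 : ℂ) • ((1 : M2) ⊗ₖ (1 : M2)
      + (n3 : ℂ) • (σ3 ⊗ₖ (1 : M2)) + (s3 : ℂ) • ((1 : M2) ⊗ₖ σ3) + (t33 : ℂ) • (σ3 ⊗ₖ σ3)))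
    (hpsd : Scl.PosSemidef) (hn : |n3| < 1) (hs : |s3| < 1) :
    (∀ A B : Fin 3 → M2, ComplementaryTriple A → ComplementaryTriple B →
      ∑ i : Fin 3, |Cor Scl (A i) (B i)| ≤
        |t33 - n3 * s3| / Real.sqrt ((1 - n3 ^ 2) * (1 - s3 ^ 2))) ∧
    ∑ i : Fin 3, |Cor Scl (pauli i) (pauli i)| =
      |t33 - n3 * s3| / Real.sqrt ((1 - n3 ^ 2) * (1 - s3 ^ 2)) ∧
    ∑ i : Fin 3, |Cor Scl (pauli i) (pauli i)| = |Cor Scl σ3 σ3| := by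
  have hScl : Scl = SclF n3 s3 t33 := hform
  subst hScl
  set C : ℝ := |t33 - n3 * s3| / Real.sqrt ((1 - n3 ^ 2) * (1 - s3 ^ 2)) with hC
  have hC0 : 0 ≤ C := by positivity
  -- correlations for Pauli triples
  have c1 : Cor (SclF n3 s3 t33) σ1 σ1 = 0 := by
    rw [Cor_eq n3 s3 t33 (a := 0) (b := 0) (by simp [σ1]) (by simp [σ1])
      (by simp [σ1]) (by simp [σ1])]
    simp
  have c2 : Cor (SclF n3 s3 t33) σ2 σ2 = 0 := by
    rw [Cor_eq n3 s3 t33 (a := 0) (b := 0) (by simp [σ2]) (by simp [σ2])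
      (by simp [σ2]) (by simp [σ2])]
    simp
  have c3 : |Cor (SclF n3 s3 t33) σ3 σ3| = C := by
    rw [Cor_eq n3 s3 t33 (a := 1) (b := 1) (by simp [σ3]) (by simp [σ3])
      (by simp [σ3]) (by simp [σ3])]
    rw [abs_div, _root_.abs_of_nonneg (Real.sqrt_nonneg _)]
    norm_num [hC]
  refine ⟨?_, ?_, ?_⟩
  · intro A B hA hB
    have key : ∀ i : Fin 3, |Cor (SclF n3 s3 t33) (A i) (B i)| ≤
        (|(A i 0 0).re| * |(B i 0 0).re|) * C := by
      intro i
      obtain ⟨eA0, eA1, _, eAsq⟩ := dich_facts (hA.1 i)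
      obtain ⟨eB0, eB1, _, eBsq⟩ := dich_facts (hB.1 i)
      have haa : ((A i 0 0).re)^2 ≤ 1 := by nlinarith [sq_nonneg ((A i 0 1).re), sq_nonneg ((A i 0 1).im)]
      have hbb : ((B i 0 0).re)^2 ≤ 1 := by nlinarith [sq_nonneg ((B i 0 1).re), sq_nonneg ((B i 0 1).im)]
      rw [Cor_eq n3 s3 t33 eA0 eA1 eB0 eB1]
      exact term_bound t33 _ _ hn hs haa hbb
    calc ∑ i : Fin 3, |Cor (SclF n3 s3 t33) (A i) (B i)|
        ≤ ∑ i : Fin 3, (|(A i 0 0).re| * |(B i 0 0).re|) * C :=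
          Finset.sum_le_sum fun i _ => key i
      _ = (∑ i : Fin 3, |(A i 0 0).re| * |(B i 0 0).re|) * C := by
          rw [Finset.sum_mul]
      _ ≤ 1 * C := by
          apply mul_le_mul_of_nonneg_right _ hC0
          have hcs := Finset.sum_mul_sq_le_sq_mul_sq Finset.univ
            (fun i : Fin 3 => |(A i 0 0).re|) (fun i : Fin 3 => |(B i 0 0).re|)
          have hsa : ∑ i : Fin 3, |(A i 0 0).re|^2 = 1 := by
            simpa [_root_.sq_abs] using sum_sq_col hA
          have hsb : ∑ i : Fin 3, |(B i 0 0).re|^2 = 1 := by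
            simpa [_root_.sq_abs] using sum_sq_col hB
          rw [hsa, hsb] at hcs
          have hpos : 0 ≤ ∑ i : Fin 3, |(A i 0 0).re| * |(B i 0 0).re| :=
            Finset.sum_nonneg fun i _ => mul_nonneg (abs_nonneg _) (abs_nonneg _)
          nlinarith [hcs, hpos]
      _ = C := one_mul C
  · rw [Fin.sum_univ_three]
    simp only [pauli, Matrix.cons_val_zero, Matrix.cons_val_one, Matrix.head_cons]
    rw [c1, c2]
    simpa using c3
  · rw [Fin.sum_univ_three]
    simp only [pauli, Matrix.cons_val_zero, Matrix.cons_val_one, Matrix.head_cons]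
    rw [c1, c2]
    simp
end
end

section
/- (Theorem 1) Let S = Σ_{k,ℓ∈{0,1}} p_{kℓ} (|e_k⟩⟨e_k|) ⊗ (|h_ℓ⟩⟨h_ℓ|) be a classically correlated two-qubit state, where the p_{kℓ} are nonnegative reals summing to 1 and {e₀,e₁} and {h₀,h₁} are orthonormal bases of ℂ². Assume 1 − E_S(A⊗I)² > 0 and 1 − E_S(I⊗B)² > 0 for all dichotomic observables A, B. Then there exist dichotomic observables A* and B* such that for every pair of complementary triples (A₁,A₂,A₃) and (B₁,B₂,B₃) of dichotomic observables, Σ_{i=1}^{3} |Cor_S(Aᵢ, Bᵢ)| ≤ |Cor_S(A*, B*)|; i.e., the total correlations of a classically correlated two-qubit state can be concentrated in a single pair of observables. -/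
open Matrix Complex
open scoped Kronecker ComplexConjugate ComplexOrder

noncomputable section

/-- The rank-one projection |v⟩⟨v| onto a vector v ∈ ℂ². -/
def proj (v : Fin 2 → ℂ) : M2 := Matrix.vecMulVec v (star v)

/-- The family e₀, e₁ is an orthonormal basis of ℂ². -/
def IsOrthonormalBasis2 (e : Fin 2 → Fin 2 → ℂ) : Prop :=
  ∀ k l, ∑ j : Fin 2, (starRingEnd ℂ) (e k j) * e l j = if k = l then 1 else 0

namespace CCAux

def qf (v : Fin 2 → ℂ) (M : M2) : ℂ := star v ⬝ᵥ M *ᵥ v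

lemma trace_proj_mul (v : Fin 2 → ℂ) (M : M2) : (proj v * M).trace = qf v M := by
  simp only [proj, qf, Matrix.trace, Matrix.diag, Matrix.mul_apply, Matrix.vecMulVec_apply,
    dotProduct, Matrix.mulVec, Pi.star_apply, Fin.sum_univ_two]
  ring

lemma trace_mul_proj (v : Fin 2 → ℂ) (M : M2) : (M * proj v).trace = qf v M := by
  rw [Matrix.trace_mul_comm, trace_proj_mul]

lemma qf_conj {A : M2} (hA : A.IsHermitian) (v : Fin 2 → ℂ) :
    (starRingEnd ℂ) (qf v A) = qf v A := by
  have h : ∀ i j, (starRingEnd ℂ) (A j i) = A i j := fun i j => by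
    conv_rhs => rw [← hA]
    simp [Matrix.conjTranspose_apply]
  simp only [qf, dotProduct, Matrix.mulVec, dotProduct, Fin.sum_univ_two, Pi.star_apply,
    RCLike.star_def, map_add, _root_.map_mul, Complex.conj_conj]
  simp only [h]
  ring

lemma qf_real {A : M2} (hA : A.IsHermitian) (v : Fin 2 → ℂ) :
    qf v A = ((qf v A).re : ℂ) :=
  (Complex.conj_eq_iff_re.mp (qf_conj hA v)).symm

lemma sum_proj {e : Fin 2 → Fin 2 → ℂ} (he : IsOrthonormalBasis2 e) :
    ∑ k : Fin 2, proj (e k) = 1 := by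
  set U : M2 := Matrix.of (fun k j => e k j) with hU
  have h1 : U * Uᴴ = 1 := by
    ext k l
    have h := he l k
    simp only [Fin.sum_univ_two] at h
    simp only [hU, Matrix.mul_apply, Matrix.conjTranspose_apply, Matrix.of_apply,
      Complex.star_def, Matrix.one_apply, Fin.sum_univ_two]
    rcases eq_or_ne k l with rfl | hkl
    · simp only [if_pos rfl] at h ⊢; linear_combination h
    · simp only [if_neg hkl, if_neg (Ne.symm hkl)] at h ⊢; linear_combination h
  have h2 : Uᴴ * U = 1 := mul_eq_one_comm.mp h1
  ext i j
  have h := congrArg (starRingEnd ℂ) (congrFun (congrFun h2 i) j)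
  simp only [Matrix.mul_apply, Matrix.conjTranspose_apply, hU, Matrix.of_apply, map_add,
    _root_.map_mul, Complex.conj_conj, Matrix.one_apply, Fin.sum_univ_two,
    apply_ite (starRingEnd ℂ), _root_.map_one, _root_.map_zero, Complex.star_def] at h
  simp only [Finset.sum_apply, proj, Matrix.vecMulVec_apply, Pi.star_apply, Complex.star_def,
    Matrix.one_apply, Fin.sum_univ_two, Matrix.add_apply]
  rcases eq_or_ne i j with rfl | hij
  · simp only [if_pos rfl] at h ⊢; linear_combination h
  · simp only [if_neg hij] at h ⊢; linear_combination h

lemma trace_eq_sum_qf {e : Fin 2 → Fin 2 → ℂ} (he : IsOrthonormalBasis2 e) (A : M2) :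
    A.trace = ∑ k : Fin 2, qf (e k) A := by
  calc A.trace = (A * 1).trace := by rw [mul_one]
    _ = (A * ∑ k : Fin 2, proj (e k)).trace := by rw [sum_proj he]
    _ = ∑ k : Fin 2, (A * proj (e k)).trace := by
        rw [Matrix.mul_sum, Matrix.trace_sum]
    _ = ∑ k : Fin 2, qf (e k) A := by simp [trace_mul_proj]


lemma trace_conjTranspose_mul_self_re_nonneg (X : M2) : 0 ≤ ((Xᴴ * X).trace).re := by
  have : (Xᴴ * X).trace = ∑ i : Fin 2, ∑ j : Fin 2, (starRingEnd ℂ) (X j i) * X j i := by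
    simp [Matrix.trace, Matrix.diag, Matrix.mul_apply, Matrix.conjTranspose_apply]
  rw [this]
  simp only [Fin.sum_univ_two, Complex.add_re, Complex.mul_re, Complex.conj_re,
    Complex.conj_im, neg_mul, sub_neg_eq_add, ← sq]
  positivity

variable {v : Fin 2 → ℂ}

lemma hv' (hv : ∑ j : Fin 2, (starRingEnd ℂ) (v j) * v j = 1) :
    (starRingEnd ℂ) (v 0) * v 0 + (starRingEnd ℂ) (v 1) * v 1 = 1 := by
  simpa [Fin.sum_univ_two] using hv

lemma proj_herm : (proj v)ᴴ = proj v := by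
  ext i j
  simp [proj, Matrix.conjTranspose_apply, Matrix.vecMulVec_apply, mul_comm]

lemma proj_idem (hv : ∑ j : Fin 2, (starRingEnd ℂ) (v j) * v j = 1) :
    proj v * proj v = proj v := by
  have h := hv' hv
  ext i j
  simp only [proj, Matrix.mul_apply, Matrix.vecMulVec_apply, Pi.star_apply, Complex.star_def,
    Fin.sum_univ_two]
  linear_combination (v i * (starRingEnd ℂ) (v j)) * h

lemma proj_trace (hv : ∑ j : Fin 2, (starRingEnd ℂ) (v j) * v j = 1) :
    (proj v).trace = 1 := by
  have h := hv' hv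
  simp only [Matrix.trace, Matrix.diag, proj, Matrix.vecMulVec_apply, Pi.star_apply,
    Complex.star_def, Fin.sum_univ_two]
  linear_combination h

lemma qf_one (hv : ∑ j : Fin 2, (starRingEnd ℂ) (v j) * v j = 1) : qf v 1 = 1 := by
  have h := hv' hv
  simp only [qf, dotProduct, Matrix.mulVec_one, Matrix.one_mulVec, Pi.star_apply,
    Complex.star_def, Fin.sum_univ_two]
  linear_combination h

/-- The observable `2 P_v - 1`. -/
def nmat (v : Fin 2 → ℂ) : M2 := (2 : ℂ) • proj v - 1

lemma nmat_herm : (nmat v)ᴴ = nmat v := by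
  simp [nmat, Matrix.conjTranspose_smul, proj_herm]

lemma nmat_sq (hv : ∑ j : Fin 2, (starRingEnd ℂ) (v j) * v j = 1) :
    nmat v * nmat v = 1 := by
  simp only [nmat, Matrix.sub_mul, Matrix.mul_sub, Matrix.smul_mul, Matrix.mul_smul,
    proj_idem hv, one_mul, mul_one, smul_smul]
  module

lemma nmat_trace (hv : ∑ j : Fin 2, (starRingEnd ℂ) (v j) * v j = 1) :
    (nmat v).trace = 0 := by
  rw [nmat, Matrix.trace_sub, Matrix.trace_smul, proj_trace hv, Matrix.trace_one]
  norm_num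

lemma qf_nmat (hv : ∑ j : Fin 2, (starRingEnd ℂ) (v j) * v j = 1) :
    qf v (nmat v) = 1 := by
  rw [← trace_proj_mul]
  have : proj v * nmat v = (2 : ℂ) • proj v - proj v := by
    simp only [nmat, Matrix.mul_sub, Matrix.mul_smul, proj_idem hv, mul_one]
  rw [this, Matrix.trace_sub, Matrix.trace_smul, proj_trace hv]
  norm_num

lemma bessel (hv : ∑ j : Fin 2, (starRingEnd ℂ) (v j) * v j = 1)
    {A : Fin 3 → M2} (hA : ComplementaryTriple A) :
    ∑ i : Fin 3, ((qf v (A i)).re) ^ 2 ≤ 1 := by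
  set a : Fin 3 → ℝ := fun i => (qf v (A i)).re with ha
  have hqf : ∀ i, qf v (A i) = ((a i : ℝ) : ℂ) := fun i => qf_real (hA.1 i).1 v
  set N : M2 := nmat v with hN
  -- trace identities
  have htrA : ∀ i, (A i).trace = 0 := fun i => (hA.1 i).2.2
  have htNA : ∀ i, (N * A i).trace = 2 * ((a i : ℝ) : ℂ) := by
    intro i
    have : N * A i = (2 : ℂ) • (proj v * A i) - A i := by
      simp only [hN, nmat, Matrix.sub_mul, Matrix.smul_mul, one_mul]
    rw [this, Matrix.trace_sub, Matrix.trace_smul, trace_proj_mul, htrA i, hqf i]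
    simp [smul_eq_mul]
  have htAN : ∀ i, (A i * N).trace = 2 * ((a i : ℝ) : ℂ) := by
    intro i; rw [Matrix.trace_mul_comm, htNA i]
  have htAA : ∀ i j, (A i * A j).trace = if i = j then 2 else 0 := by
    intro i j
    rcases eq_or_ne i j with rfl | hij
    · rw [(hA.1 i).2.1, if_pos rfl, Matrix.trace_one]; norm_num
    · rw [if_neg hij]; exact hA.2 i j hij
  have htNN : (N * N).trace = 2 := by
    rw [nmat_sq hv, Matrix.trace_one]; norm_num
  set X : M2 := N - ∑ i : Fin 3, ((a i : ℝ) : ℂ) • A i with hX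
  have hXherm : Xᴴ = X := by
    have hsum : (∑ i : Fin 3, ((a i : ℝ) : ℂ) • A i)ᴴ = ∑ i : Fin 3, ((a i : ℝ) : ℂ) • A i := by
      rw [Fin.sum_univ_three]
      simp only [Matrix.conjTranspose_add, Matrix.conjTranspose_smul]
      rw [(hA.1 0).1, (hA.1 1).1, (hA.1 2).1]
      simp [Complex.star_def, Complex.conj_ofReal]
    rw [hX, Matrix.conjTranspose_sub, nmat_herm, hsum]
  have key : (Xᴴ * X).trace = ((2 - 2 * ∑ i : Fin 3, (a i) ^ 2 : ℝ) : ℂ) := by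
    rw [hXherm]
    simp only [hX, Matrix.sub_mul, Matrix.mul_sub, Matrix.trace_sub, Matrix.sum_mul,
      Matrix.mul_sum, Matrix.trace_sum, Matrix.smul_mul, Matrix.mul_smul, Matrix.trace_smul,
      smul_eq_mul, smul_smul]
    rw [htNN]
    simp only [htNA, htAN]
    rw [Fin.sum_univ_three, Fin.sum_univ_three, Fin.sum_univ_three, Fin.sum_univ_three,
      Fin.sum_univ_three]
    simp only [htAA]
    norm_num
    push_cast
    rw [Fin.sum_univ_three]
    ring
  have hnn := trace_conjTranspose_mul_self_re_nonneg X
  rw [key] at hnn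
  rw [Complex.ofReal_re] at hnn
  nlinarith [hnn]


lemma trace_S_mul {p : Fin 2 → Fin 2 → ℝ} {e h : Fin 2 → Fin 2 → ℂ} {S : M4}
    (hform : S = ∑ k : Fin 2, ∑ l : Fin 2, (p k l : ℂ) • (proj (e k) ⊗ₖ proj (h l)))
    (A B : M2) :
    (S * (A ⊗ₖ B)).trace =
      ∑ k : Fin 2, ∑ l : Fin 2, (p k l : ℂ) * (qf (e k) A * qf (h l) B) := by
  subst hform
  rw [Matrix.sum_mul, Matrix.trace_sum]
  refine Finset.sum_congr rfl fun k _ => ?_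
  rw [Matrix.sum_mul, Matrix.trace_sum]
  refine Finset.sum_congr rfl fun l _ => ?_
  rw [Matrix.smul_mul, Matrix.trace_smul, ← Matrix.mul_kronecker_mul, Matrix.trace_kronecker,
    trace_proj_mul, trace_proj_mul, smul_eq_mul]

end CCAux

set_option maxHeartbeats 1000000 in
/-- Theorem 1: for a classically correlated two-qubit state
`S = Σ_{k,ℓ} p_{kℓ} |e_k⟩⟨e_k| ⊗ |h_ℓ⟩⟨h_ℓ|` with all variances positive, there exists a
single pair of dichotomic observables (A*, B*) whose absolute PCC dominates the sum of
absolute PCC's over every pair of complementary triples. -/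
theorem classically_correlated_concentration (p : Fin 2 → Fin 2 → ℝ)
    (e h : Fin 2 → Fin 2 → ℂ) (S : M4)
    (hp : ∀ k l, 0 ≤ p k l) (hpsum : ∑ k : Fin 2, ∑ l : Fin 2, p k l = 1)
    (he : IsOrthonormalBasis2 e) (hh : IsOrthonormalBasis2 h)
    (hform : S = ∑ k : Fin 2, ∑ l : Fin 2, (p k l : ℂ) • (proj (e k) ⊗ₖ proj (h l)))
    (hvarA : ∀ A : M2, Dichotomic A → 0 < 1 - (EE S A 1) ^ 2)
    (hvarB : ∀ B : M2, Dichotomic B → 0 < 1 - (EE S 1 B) ^ 2) :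
    ∃ Astar Bstar : M2, Dichotomic Astar ∧ Dichotomic Bstar ∧
      ∀ A B : Fin 3 → M2, ComplementaryTriple A → ComplementaryTriple B →
        ∑ i : Fin 3, |Cor S (A i) (B i)| ≤ |Cor S Astar Bstar| := by
  classical
  have he00 : ∑ j : Fin 2, (starRingEnd ℂ) (e 0 j) * e 0 j = 1 := by simpa using he 0 0
  have he10 : ∑ j : Fin 2, (starRingEnd ℂ) (e 1 j) * e 1 j = 1 := by simpa using he 1 1
  have hh00 : ∑ j : Fin 2, (starRingEnd ℂ) (h 0 j) * h 0 j = 1 := by simpa using hh 0 0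
  have hh10 : ∑ j : Fin 2, (starRingEnd ℂ) (h 1 j) * h 1 j = 1 := by simpa using hh 1 1
  set a : M2 → ℝ := fun A => (CCAux.qf (e 0) A).re with ha
  set b : M2 → ℝ := fun B => (CCAux.qf (h 0) B).re with hb
  set u : ℝ := p 0 0 + p 0 1 - (p 1 0 + p 1 1) with hu
  set w2 : ℝ := p 0 0 + p 1 0 - (p 0 1 + p 1 1) with hw2
  set w3 : ℝ := p 0 0 - p 0 1 - (p 1 0 - p 1 1) with hw3
  -- quadratic form values for dichotomic observables
  have hqe : ∀ A : M2, Dichotomic A →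
      CCAux.qf (e 0) A = ((a A : ℝ) : ℂ) ∧ CCAux.qf (e 1) A = -((a A : ℝ) : ℂ) := by
    intro A hA
    have h0 : CCAux.qf (e 0) A = ((a A : ℝ) : ℂ) := CCAux.qf_real hA.1 (e 0)
    refine ⟨h0, ?_⟩
    have ht := CCAux.trace_eq_sum_qf he A
    rw [hA.2.2, Fin.sum_univ_two, h0] at ht
    linear_combination -ht
  have hqh : ∀ B : M2, Dichotomic B →
      CCAux.qf (h 0) B = ((b B : ℝ) : ℂ) ∧ CCAux.qf (h 1) B = -((b B : ℝ) : ℂ) := by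
    intro B hB
    have h0 : CCAux.qf (h 0) B = ((b B : ℝ) : ℂ) := CCAux.qf_real hB.1 (h 0)
    refine ⟨h0, ?_⟩
    have ht := CCAux.trace_eq_sum_qf hh B
    rw [hB.2.2, Fin.sum_univ_two, h0] at ht
    linear_combination -ht
  -- expectation values
  have EEf : ∀ A B : M2, Dichotomic A → Dichotomic B → EE S A B = a A * b B * w3 := by
    intro A B hA hB
    have t := CCAux.trace_S_mul hform A B
    simp only [Fin.sum_univ_two] at t
    rw [(hqe A hA).1, (hqe A hA).2, (hqh B hB).1, (hqh B hB).2] at t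
    have t2 : (S * (A ⊗ₖ B)).trace = ((a A * b B * w3 : ℝ) : ℂ) := by
      rw [t, hw3]; push_cast; ring
    simp only [EE, t2, Complex.ofReal_re]
  have EEA : ∀ A : M2, Dichotomic A → EE S A 1 = a A * u := by
    intro A hA
    have t := CCAux.trace_S_mul hform A 1
    simp only [Fin.sum_univ_two] at t
    rw [(hqe A hA).1, (hqe A hA).2, CCAux.qf_one hh00, CCAux.qf_one hh10] at t
    have t2 : (S * (A ⊗ₖ (1 : M2))).trace = ((a A * u : ℝ) : ℂ) := by
      rw [t, hu]; push_cast; ring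
    simp only [EE, t2, Complex.ofReal_re]
  have EEB : ∀ B : M2, Dichotomic B → EE S 1 B = b B * w2 := by
    intro B hB
    have t := CCAux.trace_S_mul hform 1 B
    simp only [Fin.sum_univ_two] at t
    rw [(hqh B hB).1, (hqh B hB).2, CCAux.qf_one he00, CCAux.qf_one he10] at t
    have t2 : (S * ((1 : M2) ⊗ₖ B)).trace = ((b B * w2 : ℝ) : ℂ) := by
      rw [t, hw2]; push_cast; ring
    simp only [EE, t2, Complex.ofReal_re]
  have Covf : ∀ A B : M2, Dichotomic A → Dichotomic B →
      Cov S A B = a A * b B * (w3 - u * w2) := by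
    intro A B hA hB
    simp only [Cov, EEf A B hA hB, EEA A hA, EEB B hB]
    ring
  -- the optimal observables
  have hAstar : Dichotomic (CCAux.nmat (e 0)) :=
    ⟨CCAux.nmat_herm, CCAux.nmat_sq he00, CCAux.nmat_trace he00⟩
  have hBstar : Dichotomic (CCAux.nmat (h 0)) :=
    ⟨CCAux.nmat_herm, CCAux.nmat_sq hh00, CCAux.nmat_trace hh00⟩
  have haA : a (CCAux.nmat (e 0)) = 1 := by
    show (CCAux.qf (e 0) (CCAux.nmat (e 0))).re = 1
    rw [CCAux.qf_nmat he00]; simp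
  have hbB : b (CCAux.nmat (h 0)) = 1 := by
    show (CCAux.qf (h 0) (CCAux.nmat (h 0))).re = 1
    rw [CCAux.qf_nmat hh00]; simp
  have hu2 : u ^ 2 < 1 := by
    have := hvarA _ hAstar
    rw [EEA _ hAstar, haA, one_mul] at this
    linarith
  have hw22 : w2 ^ 2 < 1 := by
    have := hvarB _ hBstar
    rw [EEB _ hBstar, hbB, one_mul] at this
    linarith
  set D : ℝ := (1 - u ^ 2) * (1 - w2 ^ 2) with hD
  have hDpos : 0 < D := mul_pos (by linarith) (by linarith)
  have hsD : 0 < Real.sqrt D := Real.sqrt_pos.mpr hDpos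
  set C : ℝ := |w3 - u * w2| / Real.sqrt D with hC
  have hC0 : 0 ≤ C := div_nonneg (abs_nonneg _) (Real.sqrt_nonneg _)
  have hCorStar : |Cor S (CCAux.nmat (e 0)) (CCAux.nmat (h 0))| = C := by
    have h1 : Cov S (CCAux.nmat (e 0)) (CCAux.nmat (h 0)) = w3 - u * w2 := by
      rw [Covf _ _ hAstar hBstar, haA, hbB]; ring
    have h2 : Var1 S (CCAux.nmat (e 0)) = 1 - u ^ 2 := by
      simp only [Var1]; rw [EEA _ hAstar, haA, one_mul]
    have h3 : Var2 S (CCAux.nmat (h 0)) = 1 - w2 ^ 2 := by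
      simp only [Var2]; rw [EEB _ hBstar, hbB, one_mul]
    rw [Cor, h1, h2, h3, ← hD, abs_div, _root_.abs_of_nonneg (Real.sqrt_nonneg _), hC]
  -- per-pair estimate
  have pair : ∀ A B : M2, Dichotomic A → Dichotomic B → a A ^ 2 ≤ 1 → b B ^ 2 ≤ 1 →
      |Cor S A B| ≤ C * (|a A| * |b B|) := by
    intro A B hA hB ha2 hb2
    have hV1 : Var1 S A = 1 - (a A * u) ^ 2 := by simp only [Var1]; rw [EEA A hA]
    have hV2 : Var2 S B = 1 - (b B * w2) ^ 2 := by simp only [Var2]; rw [EEB B hB]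
    have hV1pos : 0 < Var1 S A := hvarA A hA
    have hV2pos : 0 < Var2 S B := hvarB B hB
    have hge1 : 1 - u ^ 2 ≤ Var1 S A := by rw [hV1]; nlinarith [sq_nonneg u]
    have hge2 : 1 - w2 ^ 2 ≤ Var2 S B := by rw [hV2]; nlinarith [sq_nonneg w2]
    have hprod : D ≤ Var1 S A * Var2 S B := by
      rw [hD]
      exact mul_le_mul hge1 hge2 (by linarith) (le_of_lt hV1pos)
    have hsqrt : Real.sqrt D ≤ Real.sqrt (Var1 S A * Var2 S B) := Real.sqrt_le_sqrt hprod
    have hcov := Covf A B hA hB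
    calc |Cor S A B| = |Cov S A B| / Real.sqrt (Var1 S A * Var2 S B) := by
          rw [Cor, abs_div, _root_.abs_of_nonneg (Real.sqrt_nonneg _)]
      _ ≤ |Cov S A B| / Real.sqrt D := by
          exact div_le_div_of_nonneg_left (abs_nonneg _) hsD hsqrt
      _ = C * (|a A| * |b B|) := by
          rw [hcov, abs_mul, abs_mul, hC]; ring
  refine ⟨CCAux.nmat (e 0), CCAux.nmat (h 0), hAstar, hBstar, ?_⟩
  intro AT BT hAT hBT
  have besA : a (AT 0) ^ 2 + a (AT 1) ^ 2 + a (AT 2) ^ 2 ≤ 1 := by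
    have t := CCAux.bessel he00 hAT
    rw [Fin.sum_univ_three] at t
    exact t
  have besB : b (BT 0) ^ 2 + b (BT 1) ^ 2 + b (BT 2) ^ 2 ≤ 1 := by
    have t := CCAux.bessel hh00 hBT
    rw [Fin.sum_univ_three] at t
    exact t
  have habs : ∀ x y : ℝ, |x| * |y| ≤ (x ^ 2 + y ^ 2) / 2 := by
    intro x y
    nlinarith [sq_nonneg (|x| - |y|), _root_.sq_abs x, _root_.sq_abs y]
  have sqa : ∀ i : Fin 3, a (AT i) ^ 2 ≤ 1 := by
    have h0 : a (AT 0) ^ 2 ≤ 1 := by nlinarith [sq_nonneg (a (AT 1)), sq_nonneg (a (AT 2))]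
    have h1 : a (AT 1) ^ 2 ≤ 1 := by nlinarith [sq_nonneg (a (AT 0)), sq_nonneg (a (AT 2))]
    have h2 : a (AT 2) ^ 2 ≤ 1 := by nlinarith [sq_nonneg (a (AT 0)), sq_nonneg (a (AT 1))]
    intro i
    fin_cases i
    · exact h0
    · exact h1
    · exact h2
  have sqb : ∀ i : Fin 3, b (BT i) ^ 2 ≤ 1 := by
    have h0 : b (BT 0) ^ 2 ≤ 1 := by nlinarith [sq_nonneg (b (BT 1)), sq_nonneg (b (BT 2))]
    have h1 : b (BT 1) ^ 2 ≤ 1 := by nlinarith [sq_nonneg (b (BT 0)), sq_nonneg (b (BT 2))]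
    have h2 : b (BT 2) ^ 2 ≤ 1 := by nlinarith [sq_nonneg (b (BT 0)), sq_nonneg (b (BT 1))]
    intro i
    fin_cases i
    · exact h0
    · exact h1
    · exact h2
  have T : ∀ i : Fin 3, |Cor S (AT i) (BT i)| ≤ C * ((a (AT i) ^ 2 + b (BT i) ^ 2) / 2) := by
    intro i
    exact le_trans (pair (AT i) (BT i) (hAT.1 i) (hBT.1 i) (sqa i) (sqb i))
      (mul_le_mul_of_nonneg_left (habs _ _) hC0)
  rw [Fin.sum_univ_three, hCorStar]
  have T0 := T 0; have T1 := T 1; have T2 := T 2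
  nlinarith [T0, T1, T2, besA, besB, hC0]
end
end

section
/- (Corollary 1, concrete form) Let S = Σ_{k,ℓ∈{0,1}} p_{kℓ} (|e_k⟩⟨e_k|) ⊗ (|h_ℓ⟩⟨h_ℓ|) be a classically correlated two-qubit state, where the p_{kℓ} are nonnegative reals summing to 1 and {e₀,e₁}, {h₀,h₁} are orthonormal bases of ℂ². Assume 1 − E_S(A⊗I)² > 0 and 1 − E_S(I⊗B)² > 0 for all dichotomic observables A, B. Then for every pair of complementary triples (A₁,A₂,A₃) and (B₁,B₂,B₃) of dichotomic observables, Σ_{i=1}^{3} |Cor_S(Aᵢ, Bᵢ)| ≤ 1. Consequently, any two-qubit state whose total correlations over a pair of complementary triples exceed 1 cannot be classically correlated. -/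
open Matrix Complex
open scoped Kronecker ComplexConjugate ComplexOrder

noncomputable section

/-- S is a classically correlated two-qubit state:
`S = Σ_{k,ℓ} p_{kℓ} |e_k⟩⟨e_k| ⊗ |h_ℓ⟩⟨h_ℓ|`. -/
def ClassicallyCorrelated (S : M4) : Prop :=
  ∃ (p : Fin 2 → Fin 2 → ℝ) (e h : Fin 2 → Fin 2 → ℂ),
    (∀ k l, 0 ≤ p k l) ∧ (∑ k : Fin 2, ∑ l : Fin 2, p k l = 1) ∧
    IsOrthonormalBasis2 e ∧ IsOrthonormalBasis2 h ∧
    S = ∑ k : Fin 2, ∑ l : Fin 2, (p k l : ℂ) • (proj (e k) ⊗ₖ proj (h l))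

/-!
For `S = Σ p_{kℓ} |e_k⟩⟨e_k| ⊗ |h_ℓ⟩⟨h_ℓ|` and traceless `A`, `B` one has
`tr(|e₁⟩⟨e₁| A) = -tr(|e₀⟩⟨e₀| A) =: -x_A`, so `S` acts on `A ⊗ B` like a pair of classical
`±1`-valued random variables with joint law `p`, rescaled by `x_A` and `y_B`. With `α`, `β`, `γ`
the means of the two variables and of their product, `Cov_S(A, B) = (γ - αβ) x_A y_B`,
`V_S(A) = 1 - α² x_A²` and `V_S(B) = 1 - β² y_B²`, so the classical Pearson inequality
`(γ - αβ)² ≤ (1 - α²)(1 - β²)` gives `|Cor_S(A, B)| ≤ |x_A| |y_B|`.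
Moreover `x_A` is the inner product of the Bloch vectors of `2 |e₀⟩⟨e₀| - 1` and `A`, and the Bloch
vectors of a complementary triple are orthonormal, so `Σᵢ x_{Aᵢ}² = 1 = Σᵢ y_{Bᵢ}²`, whence
`Σᵢ |x_{Aᵢ}| |y_{Bᵢ}| ≤ 1`.
-/

lemma proj_mul_self {v : Fin 2 → ℂ} (hv : star v ⬝ᵥ v = 1) : proj v * proj v = proj v := by
  rw [proj, vecMulVec_mul_vecMulVec, hv, one_smul]

lemma trace_proj {v : Fin 2 → ℂ} (hv : star v ⬝ᵥ v = 1) : (proj v).trace = 1 := by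
  rw [proj, trace_vecMulVec, dotProduct_comm, hv]

lemma isHermitian_proj (v : Fin 2 → ℂ) : (proj v).IsHermitian := by
  simpa [proj] using (posSemidef_vecMulVec_star_self (star v)).isHermitian

lemma Matrix.IsHermitian.trace_mul_eq_ofReal_re {n : Type*} [Fintype n] {P A : Matrix n n ℂ}
    (hP : P.IsHermitian) (hA : A.IsHermitian) : (P * A).trace = ((P * A).trace.re : ℂ) := by
  refine (Complex.conj_eq_iff_re.mp ?_).symm
  rw [← star_def, ← trace_conjTranspose, conjTranspose_mul, hA.eq, hP.eq, trace_mul_comm]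

namespace IsOrthonormalBasis2

variable {e : Fin 2 → Fin 2 → ℂ}

lemma star_dotProduct_self (he : IsOrthonormalBasis2 e) (k : Fin 2) : star (e k) ⬝ᵥ e k = 1 := by
  simpa [dotProduct] using he k k

lemma proj_add_proj (he : IsOrthonormalBasis2 e) : proj (e 0) + proj (e 1) = 1 := by
  have hrows : of e * (of e)ᴴ = 1 := by
    ext k l
    simpa [mul_apply, one_apply, mul_comm, eq_comm] using he l k
  have hcols := congrArg transpose (mul_eq_one_comm.mp hrows)
  rw [transpose_one] at hcols
  rw [← hcols]
  ext i j
  simp [proj, vecMulVec_apply, mul_apply, Fin.sum_univ_two, mul_comm]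

lemma trace_proj_one_mul (he : IsOrthonormalBasis2 e) {A : M2} (hA : A.trace = 0) :
    (proj (e 1) * A).trace = -(proj (e 0) * A).trace := by
  rw [eq_neg_iff_add_eq_zero, ← trace_add, ← add_mul, add_comm, he.proj_add_proj, one_mul, hA]

end IsOrthonormalBasis2

lemma Matrix.mulVec_dotProduct_mulVec_of_transpose_mul_eq_one {n : Type*} [Fintype n]
    [DecidableEq n] {G : Matrix n n ℝ} (hG : Gᵀ * G = 1) (m : n → ℝ) :
    G *ᵥ m ⬝ᵥ G *ᵥ m = m ⬝ᵥ m := by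
  rw [dotProduct_mulVec, ← vecMul_transpose, vecMul_vecMul, hG, vecMul_one]

-- Coordinates of a traceless Hermitian matrix in the basis (σ₁, -σ₂, σ₃).
def bloch (X : M2) : Fin 3 → ℝ := ![(X 0 1).re, (X 0 1).im, (X 0 0).re]

lemma re_trace_mul_eq_two_mul_bloch_dotProduct {X Y : M2} (hX : X.IsHermitian) (hXt : X.trace = 0)
    (hY : Y.IsHermitian) (hYt : Y.trace = 0) :
    (X * Y).trace.re = 2 * (bloch X ⬝ᵥ bloch Y) := by
  have hX10 : X 1 0 = conj (X 0 1) := (hX.apply 1 0).symm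
  have hY10 : Y 1 0 = conj (Y 0 1) := (hY.apply 1 0).symm
  have hX11 : X 1 1 = -X 0 0 := by rw [trace_fin_two] at hXt; linear_combination hXt
  have hY11 : Y 1 1 = -Y 0 0 := by rw [trace_fin_two] at hYt; linear_combination hYt
  have hX00 : (X 0 0).im = 0 := Complex.conj_eq_iff_im.mp (hX.apply 0 0)
  have hY00 : (Y 0 0).im = 0 := Complex.conj_eq_iff_im.mp (hY.apply 0 0)
  simp only [trace_fin_two, mul_apply, Fin.sum_univ_two, hX10, hX11, hY10, hY11, bloch,
    dotProduct, Fin.sum_univ_three, cons_val_zero, cons_val_one, cons_val_two, head_cons,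
    tail_cons, Complex.add_re, Complex.mul_re, Complex.neg_re, Complex.neg_im, Complex.conj_re,
    Complex.conj_im, hX00, hY00]
  ring

lemma Dichotomic.bloch_dotProduct_self {A : M2} (hA : Dichotomic A) :
    bloch A ⬝ᵥ bloch A = 1 := by
  have h := re_trace_mul_eq_two_mul_bloch_dotProduct hA.1 hA.2.2 hA.1 hA.2.2
  rw [hA.2.1, trace_one] at h
  norm_num at h
  linarith

lemma Dichotomic.sq_bloch_dotProduct_le_one {A B : M2} (hA : Dichotomic A) (hB : Dichotomic B) :
    (bloch A ⬝ᵥ bloch B) ^ 2 ≤ 1 := by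
  have h : (bloch A ⬝ᵥ bloch B) ^ 2 ≤ (bloch A ⬝ᵥ bloch A) * (bloch B ⬝ᵥ bloch B) := by
    simpa only [dotProduct, sq] using Finset.sum_mul_sq_le_sq_mul_sq Finset.univ (bloch A) (bloch B)
  rwa [hA.bloch_dotProduct_self, hB.bloch_dotProduct_self, one_mul] at h

lemma ComplementaryTriple.sum_sq_bloch_dotProduct {A : Fin 3 → M2} (hA : ComplementaryTriple A)
    (m : Fin 3 → ℝ) : ∑ i, (bloch (A i) ⬝ᵥ m) ^ 2 = m ⬝ᵥ m := by
  let G : Matrix (Fin 3) (Fin 3) ℝ := of fun i => bloch (A i)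
  have hG : G * Gᵀ = 1 := by
    ext i j
    change bloch (A i) ⬝ᵥ bloch (A j) = (1 : Matrix (Fin 3) (Fin 3) ℝ) i j
    rcases eq_or_ne i j with rfl | hij
    · rw [(hA.1 i).bloch_dotProduct_self, one_apply_eq]
    · have h := re_trace_mul_eq_two_mul_bloch_dotProduct (hA.1 i).1 (hA.1 i).2.2 (hA.1 j).1
        (hA.1 j).2.2
      rw [hA.2 i j hij, Complex.zero_re] at h
      rw [one_apply_ne hij]
      linarith
  rw [← mulVec_dotProduct_mulVec_of_transpose_mul_eq_one (mul_eq_one_comm.mp hG) m]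
  simp [dotProduct, sq, G, mulVec]

section UnitVector

variable {v : Fin 2 → ℂ}

lemma dichotomic_two_smul_proj_sub_one (hv : star v ⬝ᵥ v = 1) :
    Dichotomic ((2 : ℂ) • proj v - 1) := by
  refine ⟨?_, ?_, ?_⟩
  · exact ((isHermitian_proj v).smul (IsSelfAdjoint.ofNat 2)).sub isHermitian_one
  · rw [sub_mul, mul_sub, mul_sub, smul_mul_smul_comm, proj_mul_self hv, mul_one, one_mul,
      mul_one]
    module
  · rw [trace_sub, trace_smul, trace_proj hv, trace_one]
    norm_num

lemma re_trace_proj_mul_eq_bloch_dotProduct (hv : star v ⬝ᵥ v = 1) {A : M2} (hA : A.IsHermitian)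
    (hAt : A.trace = 0) :
    (proj v * A).trace.re = bloch ((2 : ℂ) • proj v - 1) ⬝ᵥ bloch A := by
  have hM := dichotomic_two_smul_proj_sub_one hv
  have h := re_trace_mul_eq_two_mul_bloch_dotProduct hM.1 hM.2.2 hA hAt
  rw [sub_mul, one_mul, trace_sub, hAt, sub_zero, smul_mul_assoc, trace_smul, smul_eq_mul] at h
  simp only [Complex.mul_re, Complex.re_ofNat, Complex.im_ofNat, zero_mul, sub_zero] at h
  linarith

lemma Dichotomic.sq_re_trace_proj_mul_le_one (hv : star v ⬝ᵥ v = 1) {A : M2} (hA : Dichotomic A) :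
    (proj v * A).trace.re ^ 2 ≤ 1 := by
  rw [re_trace_proj_mul_eq_bloch_dotProduct hv hA.1 hA.2.2]
  exact (dichotomic_two_smul_proj_sub_one hv).sq_bloch_dotProduct_le_one hA

lemma ComplementaryTriple.sum_sq_re_trace_proj_mul (hv : star v ⬝ᵥ v = 1) {A : Fin 3 → M2}
    (hA : ComplementaryTriple A) : ∑ i, (proj v * A i).trace.re ^ 2 = 1 := by
  simp_rw [re_trace_proj_mul_eq_bloch_dotProduct hv (hA.1 _).1 (hA.1 _).2.2,
    dotProduct_comm _ (bloch (A _)), hA.sum_sq_bloch_dotProduct,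
    (dichotomic_two_smul_proj_sub_one hv).bloch_dotProduct_self]

end UnitVector

def classicalState (p : Fin 2 → Fin 2 → ℝ) (e h : Fin 2 → Fin 2 → ℂ) : M4 :=
  ∑ k : Fin 2, ∑ l : Fin 2, (p k l : ℂ) • (proj (e k) ⊗ₖ proj (h l))

lemma trace_classicalState_mul_kronecker (p : Fin 2 → Fin 2 → ℝ) (e h : Fin 2 → Fin 2 → ℂ)
    (A B : M2) :
    (classicalState p e h * (A ⊗ₖ B)).trace =
      ∑ k, ∑ l, (p k l : ℂ) * ((proj (e k) * A).trace * (proj (h l) * B).trace) := by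
  simp only [classicalState, Finset.sum_mul, trace_sum, smul_mul_assoc, trace_smul,
    ← mul_kronecker_mul, trace_kronecker, smul_eq_mul]

section ClassicalState

variable {p : Fin 2 → Fin 2 → ℝ} {e h : Fin 2 → Fin 2 → ℂ} {A B : M2}

lemma EE_classicalState (he : IsOrthonormalBasis2 e) (hh : IsOrthonormalBasis2 h)
    (hA : A.IsHermitian) (hAt : A.trace = 0) (hB : B.IsHermitian) (hBt : B.trace = 0) :
    EE (classicalState p e h) A B = (p 0 0 - p 0 1 - p 1 0 + p 1 1) *
      ((proj (e 0) * A).trace.re * (proj (h 0) * B).trace.re) := by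
  rw [EE, trace_classicalState_mul_kronecker]
  simp only [Fin.sum_univ_two]
  rw [he.trace_proj_one_mul hAt, hh.trace_proj_one_mul hBt,
    (isHermitian_proj _).trace_mul_eq_ofReal_re hA, (isHermitian_proj _).trace_mul_eq_ofReal_re hB]
  norm_cast
  ring

lemma EE_classicalState_one_right (he : IsOrthonormalBasis2 e) (hh : IsOrthonormalBasis2 h)
    (hA : A.IsHermitian) (hAt : A.trace = 0) :
    EE (classicalState p e h) A 1 =
      (p 0 0 + p 0 1 - p 1 0 - p 1 1) * (proj (e 0) * A).trace.re := by
  rw [EE, trace_classicalState_mul_kronecker]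
  simp only [Fin.sum_univ_two, mul_one]
  rw [he.trace_proj_one_mul hAt, trace_proj (hh.star_dotProduct_self 0),
    trace_proj (hh.star_dotProduct_self 1), (isHermitian_proj _).trace_mul_eq_ofReal_re hA]
  norm_cast
  ring

lemma EE_classicalState_one_left (he : IsOrthonormalBasis2 e) (hh : IsOrthonormalBasis2 h)
    (hB : B.IsHermitian) (hBt : B.trace = 0) :
    EE (classicalState p e h) 1 B =
      (p 0 0 - p 0 1 + p 1 0 - p 1 1) * (proj (h 0) * B).trace.re := by
  rw [EE, trace_classicalState_mul_kronecker]
  simp only [Fin.sum_univ_two, mul_one]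
  rw [hh.trace_proj_one_mul hBt, trace_proj (he.star_dotProduct_self 0),
    trace_proj (he.star_dotProduct_self 1), (isHermitian_proj _).trace_mul_eq_ofReal_re hB]
  norm_cast
  ring

end ClassicalState

-- Cov² ≤ Var · Var for two ±1-valued random variables whose joint law puts the weights
-- a, b, c, d on (+,+), (+,-), (-,+), (-,-).
lemma pearson_sq_le {a b c d : ℝ} (ha : 0 ≤ a) (hb : 0 ≤ b) (hc : 0 ≤ c) (hd : 0 ≤ d)
    (hs : a + b + c + d = 1) :
    ((a - b - c + d) - (a + b - c - d) * (a - b + c - d)) ^ 2 ≤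
      (1 - (a + b - c - d) ^ 2) * (1 - (a - b + c - d) ^ 2) := by
  obtain rfl : d = 1 - a - b - c := by linarith
  nlinarith [mul_nonneg (mul_nonneg ha hd) (add_nonneg hb hc),
    mul_nonneg (mul_nonneg (add_nonneg ha hd) hb) hc]

-- For v ≤ 0 the left side is the junk value c / 0 = 0.
lemma abs_div_sqrt_le {c t v : ℝ} (h : c ^ 2 ≤ t ^ 2 * v) : |c / √v| ≤ |t| := by
  rcases le_or_gt v 0 with hv | hv
  · simp [Real.sqrt_eq_zero'.2 hv]
  have hsqrt : 0 < √v := Real.sqrt_pos.2 hv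
  rw [abs_div, abs_of_pos hsqrt, div_le_iff₀ hsqrt, ← Real.sqrt_sq_eq_abs, ← Real.sqrt_sq_eq_abs t,
    ← Real.sqrt_mul (sq_nonneg t)]
  exact Real.sqrt_le_sqrt h

lemma abs_cor_classicalState_le {p : Fin 2 → Fin 2 → ℝ} {e h : Fin 2 → Fin 2 → ℂ} {A B : M2}
    (hp : ∀ k l, 0 ≤ p k l) (hsum : ∑ k : Fin 2, ∑ l : Fin 2, p k l = 1)
    (he : IsOrthonormalBasis2 e) (hh : IsOrthonormalBasis2 h) (hA : Dichotomic A)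
    (hB : Dichotomic B) :
    |Cor (classicalState p e h) A B| ≤
      |(proj (e 0) * A).trace.re| * |(proj (h 0) * B).trace.re| := by
  have hx := hA.sq_re_trace_proj_mul_le_one (he.star_dotProduct_self 0)
  have hy := hB.sq_re_trace_proj_mul_le_one (hh.star_dotProduct_self 0)
  rw [Cor, Cov, Var1, Var2, EE_classicalState he hh hA.1 hA.2.2 hB.1 hB.2.2,
    EE_classicalState_one_right he hh hA.1 hA.2.2, EE_classicalState_one_left he hh hB.1 hB.2.2,
    ← abs_mul]
  apply abs_div_sqrt_le
  set x := (proj (e 0) * A).trace.re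
  set y := (proj (h 0) * B).trace.re
  set α := p 0 0 + p 0 1 - p 1 0 - p 1 1
  set β := p 0 0 - p 0 1 + p 1 0 - p 1 1
  set γ := p 0 0 - p 0 1 - p 1 0 + p 1 1
  have hs : p 0 0 + p 0 1 + p 1 0 + p 1 1 = 1 := by
    simpa only [Fin.sum_univ_two, add_assoc] using hsum
  have hpearson : (γ - α * β) ^ 2 ≤ (1 - α ^ 2) * (1 - β ^ 2) :=
    pearson_sq_le (hp 0 0) (hp 0 1) (hp 1 0) (hp 1 1) hs
  have hα : α ^ 2 ≤ 1 := by nlinarith [hp 0 0, hp 0 1, hp 1 0, hp 1 1]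
  have hβ : β ^ 2 ≤ 1 := by nlinarith [hp 0 0, hp 0 1, hp 1 0, hp 1 1]
  have hαx : 1 - α ^ 2 ≤ 1 - (α * x) ^ 2 := by
    rw [mul_pow]; nlinarith [mul_le_of_le_one_right (sq_nonneg α) hx]
  have hβy : 1 - β ^ 2 ≤ 1 - (β * y) ^ 2 := by
    rw [mul_pow]; nlinarith [mul_le_of_le_one_right (sq_nonneg β) hy]
  calc (γ * (x * y) - α * x * (β * y)) ^ 2 = (γ - α * β) ^ 2 * (x * y) ^ 2 := by ring
    _ ≤ (1 - α ^ 2) * (1 - β ^ 2) * (x * y) ^ 2 := by gcongr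
    _ ≤ (1 - (α * x) ^ 2) * (1 - (β * y) ^ 2) * (x * y) ^ 2 := by
        gcongr (?_ * ?_) * _
        linarith
    _ = (x * y) ^ 2 * ((1 - (α * x) ^ 2) * (1 - (β * y) ^ 2)) := by ring

lemma ClassicallyCorrelated.sum_abs_cor_le_one {S : M4} (hS : ClassicallyCorrelated S)
    {A B : Fin 3 → M2} (hA : ComplementaryTriple A) (hB : ComplementaryTriple B) :
    ∑ i, |Cor S (A i) (B i)| ≤ 1 := by
  obtain ⟨p, e, h, hp, hsum, he, hh, rfl⟩ := hS
  set x := fun i => (proj (e 0) * A i).trace.re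
  set y := fun i => (proj (h 0) * B i).trace.re
  calc ∑ i, |Cor _ (A i) (B i)| ≤ ∑ i, |x i| * |y i| := Finset.sum_le_sum fun i _ =>
        abs_cor_classicalState_le hp hsum he hh (hA.1 i) (hB.1 i)
    _ ≤ ∑ i, (x i ^ 2 + y i ^ 2) / 2 := Finset.sum_le_sum fun i _ => by
        nlinarith [two_mul_le_add_sq |x i| |y i|, sq_abs (x i), sq_abs (y i)]
    _ = 1 := by
        rw [← Finset.sum_div, Finset.sum_add_distrib,
          hA.sum_sq_re_trace_proj_mul (he.star_dotProduct_self 0),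
          hB.sum_sq_re_trace_proj_mul (hh.star_dotProduct_self 0)]
        norm_num

/-- Corollary 1: for a classically correlated two-qubit state with positive
variances, the total correlations over any pair of complementary triples are at most 1;
consequently, a state whose total correlations exceed 1 cannot be classically correlated. -/
theorem classically_correlated_total_correlations_le_one :
    (∀ S : M4, ClassicallyCorrelated S →
      (∀ A : M2, Dichotomic A → 0 < 1 - (EE S A 1) ^ 2) →
      (∀ B : M2, Dichotomic B → 0 < 1 - (EE S 1 B) ^ 2) →
      ∀ A B : Fin 3 → M2, ComplementaryTriple A → ComplementaryTriple B →
        ∑ i : Fin 3, |Cor S (A i) (B i)| ≤ 1) ∧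
    (∀ S : M4,
      (∀ A : M2, Dichotomic A → 0 < 1 - (EE S A 1) ^ 2) →
      (∀ B : M2, Dichotomic B → 0 < 1 - (EE S 1 B) ^ 2) →
      (∃ A B : Fin 3 → M2, ComplementaryTriple A ∧ ComplementaryTriple B ∧
        1 < ∑ i : Fin 3, |Cor S (A i) (B i)|) →
      ¬ ClassicallyCorrelated S) := by
  refine ⟨fun S hS _ _ A B hA hB => hS.sum_abs_cor_le_one hA hB, ?_⟩
  rintro S - - ⟨A, B, hA, hB, hlt⟩ hS
  exact (hS.sum_abs_cor_le_one hA hB).not_gt hlt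
end
end

section
/- Let S_sf = (1/4)(I₂⊗I₂ + t₁ σ₁⊗σ₁ + t₂ σ₂⊗σ₂ + t₃ σ₃⊗σ₃) be a two-qubit state in standard form (positive semidefinite). Then for every pair of dichotomic observables A and B, |Cor_{S_sf}(A, B)| ≤ max{|t₁|, |t₂|, |t₃|}, and this bound is attained by a pair of Pauli observables (σᵢ, σᵢ) for the index i maximizing |tᵢ|. -/
open Matrix Complex
open scoped Kronecker ComplexConjugate ComplexOrder

noncomputable section

lemma dicho_param (A : M2) (h : Dichotomic A) :
    ∃ a1 a2 a3 : ℝ, a1^2 + a2^2 + a3^2 = 1 ∧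
      A = !![(a3:ℂ), a1 - a2*Complex.I; a1 + a2*Complex.I, -a3] := by
  obtain ⟨hH, hsq, htr⟩ := h
  have he := hH.apply 0 1
  have he0 := hH.apply 0 0
  have him0 : (A 0 0).im = 0 := by
    have := congrArg Complex.im he0
    simp [Complex.ext_iff] at this; linarith
  have htr' : A 0 0 + A 1 1 = 0 := by
    simpa [Matrix.trace, Fin.sum_univ_succ] using htr
  have h11 : A 1 1 = -A 0 0 := by linear_combination htr'
  refine ⟨(A 1 0).re, (A 1 0).im, (A 0 0).re, ?_, ?_⟩
  · have h00 := congrFun (congrFun hsq 0) 0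
    simp [Matrix.mul_apply, Fin.sum_univ_succ, Matrix.one_apply] at h00
    rw [← he] at h00
    have hre := congrArg Complex.re h00
    simp [Complex.mul_re, Complex.mul_im] at hre
    nlinarith [hre, him0]
  · ext i j
    fin_cases i <;> fin_cases j <;>
      simp [← he, h11, Complex.ext_iff, him0]

lemma EE_param (t : Fin 3 → ℝ) (Ssf : M4)
    (hform : Ssf = (1/4 : ℂ) • ((1 : M2) ⊗ₖ (1 : M2)
      + (t 0 : ℂ) • (σ1 ⊗ₖ σ1) + (t 1 : ℂ) • (σ2 ⊗ₖ σ2) + (t 2 : ℂ) • (σ3 ⊗ₖ σ3)))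
    (a1 a2 a3 b1 b2 b3 : ℝ) :
    EE Ssf !![(a3:ℂ), a1 - a2*Complex.I; a1 + a2*Complex.I, -a3]
           !![(b3:ℂ), b1 - b2*Complex.I; b1 + b2*Complex.I, -b3]
      = t 0 * (a1*b1) + t 1 * (a2*b2) + t 2 * (a3*b3) := by
  subst hform
  simp [EE, Matrix.trace, Matrix.mul_apply, Fintype.sum_prod_type, Fin.sum_univ_succ,
    Matrix.kroneckerMap_apply, Matrix.one_apply, σ1, σ2, σ3, Matrix.smul_apply,
    Matrix.add_apply]
  ring

lemma EE_param_one (t : Fin 3 → ℝ) (Ssf : M4)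
    (hform : Ssf = (1/4 : ℂ) • ((1 : M2) ⊗ₖ (1 : M2)
      + (t 0 : ℂ) • (σ1 ⊗ₖ σ1) + (t 1 : ℂ) • (σ2 ⊗ₖ σ2) + (t 2 : ℂ) • (σ3 ⊗ₖ σ3)))
    (a1 a2 a3 : ℝ) :
    EE Ssf !![(a3:ℂ), a1 - a2*Complex.I; a1 + a2*Complex.I, -a3] 1 = 0 ∧
    EE Ssf 1 !![(a3:ℂ), a1 - a2*Complex.I; a1 + a2*Complex.I, -a3] = 0 := by
  subst hform
  constructor <;>
  · simp [EE, Matrix.trace, Matrix.mul_apply, Fintype.sum_prod_type, Fin.sum_univ_succ,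
      Matrix.kroneckerMap_apply, Matrix.one_apply, σ1, σ2, σ3, Matrix.smul_apply,
      Matrix.add_apply]

lemma Cor_param (t : Fin 3 → ℝ) (Ssf : M4)
    (hform : Ssf = (1/4 : ℂ) • ((1 : M2) ⊗ₖ (1 : M2)
      + (t 0 : ℂ) • (σ1 ⊗ₖ σ1) + (t 1 : ℂ) • (σ2 ⊗ₖ σ2) + (t 2 : ℂ) • (σ3 ⊗ₖ σ3)))
    (a1 a2 a3 b1 b2 b3 : ℝ) :
    Cor Ssf !![(a3:ℂ), a1 - a2*Complex.I; a1 + a2*Complex.I, -a3]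
            !![(b3:ℂ), b1 - b2*Complex.I; b1 + b2*Complex.I, -b3]
      = t 0 * (a1*b1) + t 1 * (a2*b2) + t 2 * (a3*b3) := by
  have h1 := (EE_param_one t Ssf hform a1 a2 a3).1
  have h2 := (EE_param_one t Ssf hform b1 b2 b3).2
  rw [Cor, Cov, Var1, Var2, h1, h2, EE_param t Ssf hform]
  norm_num


/-- for a standard-form two-qubit state, the PCC of any pair of dichotomic
observables is bounded by `max{|t₁|,|t₂|,|t₃|}`, and the bound is attained by a pair of
Pauli observables (σᵢ, σᵢ). -/
theorem standard_form_single_pair_bound (t : Fin 3 → ℝ) (Ssf : M4)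
    (hform : Ssf = (1/4 : ℂ) • ((1 : M2) ⊗ₖ (1 : M2)
      + (t 0 : ℂ) • (σ1 ⊗ₖ σ1) + (t 1 : ℂ) • (σ2 ⊗ₖ σ2) + (t 2 : ℂ) • (σ3 ⊗ₖ σ3)))
    (hpsd : Ssf.PosSemidef) :
    (∀ A B : M2, Dichotomic A → Dichotomic B →
      |Cor Ssf A B| ≤ max (max |t 0| |t 1|) |t 2|) ∧
    (∃ i : Fin 3, |Cor Ssf (pauli i) (pauli i)| = max (max |t 0| |t 1|) |t 2|) := by

  set M := max (max |t 0| |t 1|) |t 2| with hM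
  have h0 : |t 0| ≤ M := le_max_of_le_left (le_max_left _ _)
  have h1 : |t 1| ≤ M := le_max_of_le_left (le_max_right _ _)
  have h2 : |t 2| ≤ M := le_max_right _ _
  constructor
  · intro A B hA hB
    obtain ⟨a1, a2, a3, ha, rfl⟩ := dicho_param A hA
    obtain ⟨b1, b2, b3, hb, rfl⟩ := dicho_param B hB
    rw [Cor_param t Ssf hform]
    rw [abs_le]
    have hMnn : (0:ℝ) ≤ M := le_trans (abs_nonneg _) h0
    have key : ∀ s x y : ℝ, |s| ≤ M →
        -(M/2*(x^2+y^2)) ≤ s*(x*y) ∧ s*(x*y) ≤ M/2*(x^2+y^2) := by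
      intro s x y hs
      obtain ⟨hs1, hs2⟩ := abs_le.mp hs
      constructor
      · nlinarith [mul_nonneg (by linarith : (0:ℝ) ≤ M - s) (sq_nonneg (x - y)),
          mul_nonneg (by linarith : (0:ℝ) ≤ M + s) (sq_nonneg (x + y))]
      · nlinarith [mul_nonneg (by linarith : (0:ℝ) ≤ M - s) (sq_nonneg (x + y)),
          mul_nonneg (by linarith : (0:ℝ) ≤ M + s) (sq_nonneg (x - y))]
    obtain ⟨l0, u0⟩ := key (t 0) a1 b1 h0
    obtain ⟨l1, u1⟩ := key (t 1) a2 b2 h1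
    obtain ⟨l2, u2⟩ := key (t 2) a3 b3 h2
    have hsum : M/2*(a1^2+a2^2+a3^2) + M/2*(b1^2+b2^2+b3^2) = M := by
      rw [ha, hb]; ring
    constructor <;> nlinarith [l0, l1, l2, u0, u1, u2, hsum]
  · have hσ1 : σ1 = !![((0:ℝ):ℂ), (1:ℝ) - (0:ℝ)*Complex.I; (1:ℝ) + (0:ℝ)*Complex.I, -((0:ℝ):ℂ)] := by
      norm_num [σ1]
    have hσ2 : σ2 = !![((0:ℝ):ℂ), (0:ℝ) - (1:ℝ)*Complex.I; (0:ℝ) + (1:ℝ)*Complex.I, -((0:ℝ):ℂ)] := by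
      norm_num [σ2]
    have hσ3 : σ3 = !![((1:ℝ):ℂ), (0:ℝ) - (0:ℝ)*Complex.I; (0:ℝ) + (0:ℝ)*Complex.I, -((1:ℝ):ℂ)] := by
      norm_num [σ3]
    have c0 : Cor Ssf (pauli 0) (pauli 0) = t 0 := by
      show Cor Ssf σ1 σ1 = t 0
      rw [hσ1, Cor_param t Ssf hform]; ring
    have c1 : Cor Ssf (pauli 1) (pauli 1) = t 1 := by
      show Cor Ssf σ2 σ2 = t 1
      rw [hσ2, Cor_param t Ssf hform]; ring
    have c2 : Cor Ssf (pauli 2) (pauli 2) = t 2 := by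
      show Cor Ssf σ3 σ3 = t 2
      rw [hσ3, Cor_param t Ssf hform]; ring
    rcases max_choice (max |t 0| |t 1|) |t 2| with h | h
    · rcases max_choice |t 0| |t 1| with h' | h'
      · exact ⟨0, by rw [c0, hM, h, h']⟩
      · exact ⟨1, by rw [c1, hM, h, h']⟩
    · exact ⟨2, by rw [c2, hM, h]⟩
end
end

section
/- Let S_sf = (1/4)(I₂⊗I₂ + t₁ σ₁⊗σ₁ + t₂ σ₂⊗σ₂ + t₃ σ₃⊗σ₃) be a two-qubit state in standard form (positive semidefinite). Then for every pair of complementary triples (A₁,A₂,A₃) and (B₁,B₂,B₃) of dichotomic observables, Σ_{i=1}^{3} |Cor_{S_sf}(Aᵢ, Bᵢ)| ≤ |t₁| + |t₂| + |t₃|, and this bound is attained by the triples Aᵢ = Bᵢ = σᵢ (i = 1,2,3). In particular, the total correlations of S_sf equal |t₁| + |t₂| + |t₃|. -/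
/-!
A traceless Hermitian 2×2 matrix is `A = ∑ₖ aₖ σₖ` with `aₖ` real, and `tr (A B) = 2 ⟨a, b⟩`.
In the standard-form state both marginals are maximally mixed, so for traceless observables the
local expectations vanish, the variances are `1`, and `Cor (A, B) = ∑ₖ tₖ aₖ bₖ`.
Complementary triples have orthonormal coordinate vectors, so the coordinate matrix is
orthogonal and its columns are unit vectors too; bounding `|aᵢₖ bᵢₖ| ≤ (aᵢₖ² + bᵢₖ²) / 2`
and summing over `i` gives `∑ᵢ |Cor (Aᵢ, Bᵢ)| ≤ ∑ₖ |tₖ|`. The Pauli triples realise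
`Cor (σₖ, σₖ) = tₖ`.
-/

open Matrix Complex
open scoped Kronecker ComplexConjugate ComplexOrder

noncomputable section

open Finset

/-- The coordinates `(a₁, a₂, a₃)` of `A = a₀ I + a₁ σ₁ + a₂ σ₂ + a₃ σ₃` for Hermitian `A`. -/
def blochVec (A : M2) : Fin 3 → ℝ := ![(A 0 1).re, -(A 0 1).im, (A 0 0).re]

lemma isHermitian_pauli (k : Fin 3) : (pauli k).IsHermitian := by
  fin_cases k <;> ext i j <;> fin_cases i <;> fin_cases j <;> simp [pauli, σ1, σ2, σ3]

lemma trace_pauli (k : Fin 3) : (pauli k).trace = 0 := by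
  fin_cases k <;> simp [pauli, σ1, σ2, σ3, trace_fin_two]

lemma trace_pauli_mul_pauli (j k : Fin 3) :
    (pauli j * pauli k).trace = if j = k then 2 else 0 := by
  fin_cases j <;> fin_cases k <;> simp [pauli, σ1, σ2, σ3, trace_fin_two] <;> norm_num

lemma blochVec_pauli (j : Fin 3) : blochVec (pauli j) = fun k => if j = k then 1 else 0 := by
  funext k; fin_cases j <;> fin_cases k <;> simp [blochVec, pauli, σ1, σ2, σ3]

lemma eq_sum_blochVec_smul_pauli {A : M2} (hA : A.IsHermitian) (htA : A.trace = 0) :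
    A = ∑ k, (blochVec A k : ℂ) • pauli k := by
  have h00 : (A 0 0).im = 0 := Complex.conj_eq_iff_im.mp (hA.apply 0 0)
  have h11 : A 1 1 = -A 0 0 := by
    rw [trace_fin_two] at htA; linear_combination htA
  have h10 : A 1 0 = conj (A 0 1) := (hA.apply 1 0).symm
  ext i j
  fin_cases i <;> fin_cases j <;>
    simp [Fin.sum_univ_three, blochVec, pauli, σ1, σ2, σ3, Complex.ext_iff, h00, h11, h10]

lemma trace_pauli_mul {A : M2} (hA : A.IsHermitian) (htA : A.trace = 0) (j : Fin 3) :
    (pauli j * A).trace = 2 * blochVec A j := by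
  conv_lhs => rw [eq_sum_blochVec_smul_pauli hA htA]
  simp [mul_sum, trace_sum, trace_pauli_mul_pauli, mul_comm]

lemma trace_mul_eq_two_mul_dotProduct {A B : M2} (hA : A.IsHermitian) (htA : A.trace = 0)
    (hB : B.IsHermitian) (htB : B.trace = 0) :
    (A * B).trace = 2 * (blochVec A ⬝ᵥ blochVec B : ℝ) := by
  conv_lhs => rw [eq_sum_blochVec_smul_pauli hA htA]
  simp only [sum_mul, trace_sum, smul_mul, trace_smul, trace_pauli_mul hB htB, smul_eq_mul,
    dotProduct]
  push_cast
  rw [mul_sum]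
  exact sum_congr rfl fun k _ => by ring

lemma dotProduct_blochVec_of_trace_mul_eq {A B : M2} (hA : A.IsHermitian) (htA : A.trace = 0)
    (hB : B.IsHermitian) (htB : B.trace = 0) {c : ℝ} (h : (A * B).trace = 2 * c) :
    blochVec A ⬝ᵥ blochVec B = c := by
  rw [trace_mul_eq_two_mul_dotProduct hA htA hB htB] at h
  exact_mod_cast mul_left_cancel₀ two_ne_zero h

lemma Dichotomic.dotProduct_self_blochVec {A : M2} (hA : Dichotomic A) :
    blochVec A ⬝ᵥ blochVec A = 1 := by
  obtain ⟨hA, hsq, htA⟩ := hA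
  refine dotProduct_blochVec_of_trace_mul_eq hA htA hA htA ?_
  simp [hsq]

def blochMatrix (X : Fin 3 → M2) : Matrix (Fin 3) (Fin 3) ℝ := Matrix.of fun i => blochVec (X i)

lemma ComplementaryTriple.blochMatrix_mem_orthogonalGroup {X : Fin 3 → M2}
    (hX : ComplementaryTriple X) : blochMatrix X ∈ orthogonalGroup (Fin 3) ℝ := by
  rw [mem_orthogonalGroup_iff]
  ext i j
  change blochVec (X i) ⬝ᵥ blochVec (X j) = (1 : Matrix (Fin 3) (Fin 3) ℝ) i j
  obtain rfl | hij := eq_or_ne i j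
  · simpa using (hX.1 i).dotProduct_self_blochVec
  · rw [one_apply_ne hij]
    refine dotProduct_blochVec_of_trace_mul_eq (hX.1 i).1 (hX.1 i).2.2 (hX.1 j).1 (hX.1 j).2.2 ?_
    simp [hX.2 i j hij]

lemma sum_sq_apply_of_mem_orthogonalGroup {n : Type*} [Fintype n] [DecidableEq n]
    {O : Matrix n n ℝ} (hO : O ∈ orthogonalGroup n ℝ) (k : n) : ∑ i, O i k ^ 2 = 1 := by
  have := congrFun₂ ((mem_orthogonalGroup_iff' _ _).mp hO) k k
  simpa [mul_apply, sq] using this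

lemma sum_abs_mul_le_one {ι : Type*} [Fintype ι] {x y : ι → ℝ} (hx : ∑ i, x i ^ 2 = 1)
    (hy : ∑ i, y i ^ 2 = 1) : ∑ i, |x i * y i| ≤ 1 :=
  calc ∑ i, |x i * y i| ≤ ∑ i, (x i ^ 2 + y i ^ 2) / 2 := by
        refine sum_le_sum fun i _ => ?_
        rw [abs_mul, ← sq_abs (x i), ← sq_abs (y i)]
        linarith [two_mul_le_add_sq |x i| |y i|]
    _ = 1 := by rw [← sum_div, sum_add_distrib, hx, hy]; norm_num

lemma sum_abs_sum_mul_le {ι κ : Type*} [Fintype ι] [Fintype κ] (t : κ → ℝ) (a b : Matrix ι κ ℝ)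
    (ha : ∀ k, ∑ i, a i k ^ 2 = 1) (hb : ∀ k, ∑ i, b i k ^ 2 = 1) :
    ∑ i, |∑ k, t k * a i k * b i k| ≤ ∑ k, |t k| :=
  calc ∑ i, |∑ k, t k * a i k * b i k| ≤ ∑ i, ∑ k, |t k| * |a i k * b i k| := by
        refine sum_le_sum fun i _ => (abs_sum_le_sum_abs _ _).trans_eq ?_
        simp only [mul_assoc, abs_mul]
    _ = ∑ k, |t k| * ∑ i, |a i k * b i k| := by rw [sum_comm]; simp only [mul_sum]
    _ ≤ ∑ k, |t k| * 1 := by gcongr with k; exact sum_abs_mul_le_one (ha k) (hb k)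
    _ = ∑ k, |t k| := by simp only [mul_one]

def standardForm (t : Fin 3 → ℝ) : M4 :=
  (1/4 : ℂ) • ((1 : M2) ⊗ₖ (1 : M2)
      + (t 0 : ℂ) • (σ1 ⊗ₖ σ1) + (t 1 : ℂ) • (σ2 ⊗ₖ σ2) + (t 2 : ℂ) • (σ3 ⊗ₖ σ3))

lemma trace_standardForm_mul_kronecker (t : Fin 3 → ℝ) (A B : M2) :
    (standardForm t * (A ⊗ₖ B)).trace = (1/4 : ℂ) * (A.trace * B.trace
      + ∑ k, (t k : ℂ) * ((pauli k * A).trace * (pauli k * B).trace)) := by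
  simp only [standardForm, smul_mul, add_mul, ← mul_kronecker_mul, one_mul, trace_smul,
    trace_add, trace_kronecker, smul_eq_mul, Fin.sum_univ_three, add_assoc]
  rfl

section StandardForm

variable (t : Fin 3 → ℝ) {A B : M2}

lemma EE_standardForm_one_right (htA : A.trace = 0) : EE (standardForm t) A 1 = 0 := by
  simp [EE, trace_standardForm_mul_kronecker, htA, trace_pauli]

lemma EE_standardForm_one_left (htB : B.trace = 0) : EE (standardForm t) 1 B = 0 := by
  simp [EE, trace_standardForm_mul_kronecker, htB, trace_pauli]

lemma EE_standardForm (hA : A.IsHermitian) (htA : A.trace = 0) (hB : B.IsHermitian)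
    (htB : B.trace = 0) :
    EE (standardForm t) A B = ∑ k, t k * blochVec A k * blochVec B k := by
  rw [EE, trace_standardForm_mul_kronecker, htA]
  simp only [trace_pauli_mul hA htA, trace_pauli_mul hB htB]
  norm_num [mul_sum]
  exact sum_congr rfl fun k _ => by ring

lemma Cor_standardForm (hA : A.IsHermitian) (htA : A.trace = 0) (hB : B.IsHermitian)
    (htB : B.trace = 0) :
    Cor (standardForm t) A B = ∑ k, t k * blochVec A k * blochVec B k := by
  simp [Cor, Cov, Var1, Var2, EE_standardForm_one_right t htA, EE_standardForm_one_left t htB,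
    EE_standardForm t hA htA hB htB]

lemma Cor_standardForm_pauli (j : Fin 3) : Cor (standardForm t) (pauli j) (pauli j) = t j := by
  rw [Cor_standardForm t (isHermitian_pauli j) (trace_pauli j) (isHermitian_pauli j)
    (trace_pauli j), blochVec_pauli]
  simp

end StandardForm

theorem standard_form_total_correlations_general (t : Fin 3 → ℝ) (Ssf : M4)
    (hform : Ssf = (1/4 : ℂ) • ((1 : M2) ⊗ₖ (1 : M2)
      + (t 0 : ℂ) • (σ1 ⊗ₖ σ1) + (t 1 : ℂ) • (σ2 ⊗ₖ σ2) + (t 2 : ℂ) • (σ3 ⊗ₖ σ3))) :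
    (∀ A B : Fin 3 → M2, ComplementaryTriple A → ComplementaryTriple B →
      ∑ i : Fin 3, |Cor Ssf (A i) (B i)| ≤ |t 0| + |t 1| + |t 2|) ∧
    ∑ i : Fin 3, |Cor Ssf (pauli i) (pauli i)| = |t 0| + |t 1| + |t 2| := by
  obtain rfl : Ssf = standardForm t := hform
  rw [← Fin.sum_univ_three (fun k => |t k|)]
  refine ⟨fun A B hA hB => ?_, by simp only [Cor_standardForm_pauli]⟩
  have hcor (i : Fin 3) : Cor (standardForm t) (A i) (B i)
      = ∑ k, t k * blochMatrix A i k * blochMatrix B i k :=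
    Cor_standardForm t (hA.1 i).1 (hA.1 i).2.2 (hB.1 i).1 (hB.1 i).2.2
  simp only [hcor]
  exact sum_abs_sum_mul_le t _ _
    (sum_sq_apply_of_mem_orthogonalGroup hA.blochMatrix_mem_orthogonalGroup)
    (sum_sq_apply_of_mem_orthogonalGroup hB.blochMatrix_mem_orthogonalGroup)

/-- for a standard-form two-qubit state, the sum of absolute PCC's over any
pair of complementary triples is bounded by `|t₁| + |t₂| + |t₃|`, and the bound is attained
by the Pauli triples Aᵢ = Bᵢ = σᵢ; hence the total correlations equal `|t₁| + |t₂| + |t₃|`. -/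
theorem standard_form_total_correlations (t : Fin 3 → ℝ) (Ssf : M4)
    (hform : Ssf = (1/4 : ℂ) • ((1 : M2) ⊗ₖ (1 : M2)
      + (t 0 : ℂ) • (σ1 ⊗ₖ σ1) + (t 1 : ℂ) • (σ2 ⊗ₖ σ2) + (t 2 : ℂ) • (σ3 ⊗ₖ σ3)))
    (hpsd : Ssf.PosSemidef) :
    (∀ A B : Fin 3 → M2, ComplementaryTriple A → ComplementaryTriple B →
      ∑ i : Fin 3, |Cor Ssf (A i) (B i)| ≤ |t 0| + |t 1| + |t 2|) ∧
    ∑ i : Fin 3, |Cor Ssf (pauli i) (pauli i)| = |t 0| + |t 1| + |t 2| :=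
  standard_form_total_correlations_general t Ssf hform
end
end

section
/- (Theorem 2) Let S_sf = (1/4)(I₂⊗I₂ + t₁ σ₁⊗σ₁ + t₂ σ₂⊗σ₂ + t₃ σ₃⊗σ₃) be a two-qubit state in standard form (positive semidefinite) with (t₁,t₂,t₃) ≠ (0,0,0). Then the supremum over all pairs of complementary triples (A₁,A₂,A₃), (B₁,B₂,B₃) of Σ_{i=1}^{3} |Cor_{S_sf}(Aᵢ, Bᵢ)| equals the supremum over all pairs of dichotomic observables (A,B) of |Cor_{S_sf}(A, B)| if and only if exactly one of t₁, t₂, t₃ is nonzero (i.e., if and only if S_sf is classically correlated). Equivalently, |t₁| + |t₂| + |t₃| = max{|t₁|, |t₂|, |t₃|} if and only if exactly one of t₁, t₂, t₃ is nonzero. -/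
open Matrix Complex
open scoped Kronecker ComplexConjugate ComplexOrder

noncomputable section

/-! ### Auxiliary development -/

/-- The generic traceless Hermitian involution with Bloch coordinates `x,y,z`. -/
def Amat (x y z : ℝ) : M2 := !![(z:ℂ), x - y*Complex.I; x + y*Complex.I, -z]

def Smat (t1 t2 t3 : ℝ) : M4 := (1/4 : ℂ) • ((1 : M2) ⊗ₖ (1 : M2)
      + (t1 : ℂ) • (σ1 ⊗ₖ σ1) + (t2 : ℂ) • (σ2 ⊗ₖ σ2) + (t3 : ℂ) • (σ3 ⊗ₖ σ3))

lemma sigma1_eq : σ1 = Amat 1 0 0 := by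
  ext i j; fin_cases i <;> fin_cases j <;> simp [σ1, Amat]

lemma sigma2_eq : σ2 = Amat 0 1 0 := by
  ext i j; fin_cases i <;> fin_cases j <;> simp [σ2, Amat]

lemma sigma3_eq : σ3 = Amat 0 0 1 := by
  ext i j; fin_cases i <;> fin_cases j <;> simp [σ3, Amat]

lemma trace_AB (t1 t2 t3 x y z x' y' z' : ℝ) :
    Matrix.trace (Smat t1 t2 t3 * (Amat x y z ⊗ₖ Amat x' y' z'))
      = ((t1*x*x' + t2*y*y' + t3*z*z' : ℝ) : ℂ) := by
  simp [Smat, Amat, σ1, σ2, σ3, Matrix.trace, Matrix.mul_apply, Matrix.one_apply,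
    Fintype.sum_prod_type, Fin.sum_univ_succ, Complex.ext_iff]
  constructor <;> ring

lemma trace_A1 (t1 t2 t3 x y z : ℝ) :
    Matrix.trace (Smat t1 t2 t3 * (Amat x y z ⊗ₖ (1:M2))) = 0 := by
  simp [Smat, Amat, σ1, σ2, σ3, Matrix.trace, Matrix.mul_apply, Matrix.one_apply,
    Fintype.sum_prod_type, Fin.sum_univ_succ, Complex.ext_iff]

lemma trace_1B (t1 t2 t3 x y z : ℝ) :
    Matrix.trace (Smat t1 t2 t3 * ((1:M2) ⊗ₖ Amat x y z)) = 0 := by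
  simp [Smat, Amat, σ1, σ2, σ3, Matrix.trace, Matrix.mul_apply, Matrix.one_apply,
    Fintype.sum_prod_type, Fin.sum_univ_succ, Complex.ext_iff]

lemma trace_mul_Amat (x y z x' y' z' : ℝ) :
    Matrix.trace (Amat x y z * Amat x' y' z') = ((2*(x*x'+y*y'+z*z') : ℝ) : ℂ) := by
  simp [Amat, Matrix.trace, Matrix.mul_apply, Fin.sum_univ_succ, Complex.ext_iff]
  constructor <;> ring

lemma dich_Amat (x y z : ℝ) (h : x^2+y^2+z^2 = 1) : Dichotomic (Amat x y z) := by
  refine ⟨?_, ?_, ?_⟩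
  · rw [Matrix.IsHermitian]
    ext i j
    fin_cases i <;> fin_cases j <;>
      simp [Amat, Matrix.conjTranspose_apply, Complex.ext_iff]
  · ext i j
    fin_cases i <;> fin_cases j <;>
      simp [Amat, Matrix.mul_apply, Matrix.one_apply, Fin.sum_univ_succ, Complex.ext_iff] <;>
      (constructor <;> nlinarith [h])
  · simp [Amat, Matrix.trace, Fin.sum_univ_succ]

lemma dich_char {A : M2} (h : Dichotomic A) :
    ∃ x y z : ℝ, x^2+y^2+z^2 = 1 ∧ A = Amat x y z := by
  obtain ⟨hH, hsq, htr⟩ := h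
  have h10 : A 1 0 = conj (A 0 1) := by
    have := congrFun (congrFun hH.symm 1) 0
    simpa [Matrix.conjTranspose_apply] using this
  have h11 : A 1 1 = - A 0 0 := by
    have : A 0 0 + A 1 1 = 0 := by simpa [Matrix.trace, Fin.sum_univ_succ] using htr
    linear_combination this
  have him : (A 0 0).im = 0 := by
    have := congrFun (congrFun hH.symm 0) 0
    have h2 : A 0 0 = conj (A 0 0) := by simpa [Matrix.conjTranspose_apply] using this
    have := congrArg Complex.im h2
    simp at this; linarith
  refine ⟨(A 0 1).re, -(A 0 1).im, (A 0 0).re, ?_, ?_⟩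
  · have h00 : (A * A) 0 0 = 1 := by rw [hsq]; simp [Matrix.one_apply]
    rw [Matrix.mul_apply, Fin.sum_univ_succ] at h00
    simp [h10] at h00
    have hre := congrArg Complex.re h00
    simp [Complex.add_re, Complex.mul_re, Complex.mul_conj] at hre
    nlinarith [hre, him, Complex.normSq_apply (A 0 1)]
  · ext i j
    fin_cases i <;> fin_cases j <;>
      simp [Amat, Complex.ext_iff, h10, h11, him]

lemma Cor_eval (t1 t2 t3 x y z x' y' z' : ℝ) :
    Cor (Smat t1 t2 t3) (Amat x y z) (Amat x' y' z')
      = t1*x*x' + t2*y*y' + t3*z*z' := by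
  have e1 : EE (Smat t1 t2 t3) (Amat x y z) 1 = 0 := by
    simp [EE, trace_A1]
  have e2 : EE (Smat t1 t2 t3) 1 (Amat x' y' z') = 0 := by
    simp [EE, trace_1B]
  have e3 : EE (Smat t1 t2 t3) (Amat x y z) (Amat x' y' z')
      = t1*x*x' + t2*y*y' + t3*z*z' := by
    simp [EE, trace_AB]
  simp [Cor, Cov, Var1, Var2, e1, e2, e3]

lemma term_bound_s11 (t a b : ℝ) : |t*a*b| ≤ |t| * (a^2+b^2)/2 := by
  rw [abs_mul, abs_mul]
  nlinarith [sq_nonneg (|a| - |b|), _root_.sq_abs a, _root_.sq_abs b, abs_nonneg t, abs_nonneg a,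
    abs_nonneg b, mul_nonneg (abs_nonneg a) (abs_nonneg b)]

lemma pauli_complementary : ComplementaryTriple pauli := by
  constructor
  · intro i
    fin_cases i
    · show Dichotomic σ1
      rw [sigma1_eq]; exact dich_Amat 1 0 0 (by norm_num)
    · show Dichotomic σ2
      rw [sigma2_eq]; exact dich_Amat 0 1 0 (by norm_num)
    · show Dichotomic σ3
      rw [sigma3_eq]; exact dich_Amat 0 0 1 (by norm_num)
  · intro i j hij
    fin_cases i <;> fin_cases j <;>
      first
      | exact absurd rfl hij
      | norm_num [pauli, sigma1_eq, sigma2_eq, sigma3_eq, trace_mul_Amat]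

lemma col_sums (x y z : Fin 3 → ℝ) (hu : ∀ i, (x i)^2+(y i)^2+(z i)^2 = 1)
    (ho : ∀ i j, i ≠ j → x i * x j + y i * y j + z i * z j = 0) :
    ((x 0)^2 + (x 1)^2 + (x 2)^2 = 1) ∧ ((y 0)^2 + (y 1)^2 + (y 2)^2 = 1)
      ∧ ((z 0)^2 + (z 1)^2 + (z 2)^2 = 1) := by
  set O : Matrix (Fin 3) (Fin 3) ℝ := Matrix.of (fun i => ![x i, y i, z i]) with hO
  have h1 : O * Oᵀ = 1 := by
    ext i j
    rw [Matrix.mul_apply]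
    by_cases h : i = j
    · subst h
      simp [O, Matrix.transpose_apply, Fin.sum_univ_three, Matrix.one_apply]
      nlinarith [hu i]
    · simp [O, Matrix.transpose_apply, Fin.sum_univ_three, Matrix.one_apply, h]
      have := ho i j h
      linarith
  have h2 : Oᵀ * O = 1 := mul_eq_one_comm.mp h1
  have e : ∀ k : Fin 3, (Oᵀ * O) k k = 1 := by
    intro k; rw [h2]; simp [Matrix.one_apply]
  have e0 := e 0
  have e1 := e 1
  have e2 := e 2
  rw [Matrix.mul_apply] at e0 e1 e2
  simp [O, Matrix.transpose_apply, Fin.sum_univ_three] at e0 e1 e2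
  refine ⟨by nlinarith [e0], by nlinarith [e1], by nlinarith [e2]⟩

lemma pair_ub (t1 t2 t3 a1 a2 a3 b1 b2 b3 : ℝ) (ha : a1^2+a2^2+a3^2 = 1)
    (hb : b1^2+b2^2+b3^2 = 1) :
    |t1*a1*b1 + t2*a2*b2 + t3*a3*b3| ≤ max (max |t1| |t2|) |t3| := by
  set M := max (max |t1| |t2|) |t3| with hM
  have m1 : |t1| ≤ M := le_max_of_le_left (le_max_left _ _)
  have m2 : |t2| ≤ M := le_max_of_le_left (le_max_right _ _)
  have m3 : |t3| ≤ M := le_max_right _ _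
  have c1 := term_bound_s11 t1 a1 b1
  have c2 := term_bound_s11 t2 a2 b2
  have c3 := term_bound_s11 t3 a3 b3
  have habs := abs_add_three (t1*a1*b1) (t2*a2*b2) (t3*a3*b3)
  have d1 : |t1| * (a1^2+b1^2)/2 ≤ M * (a1^2+b1^2)/2 := by
    have : (0:ℝ) ≤ (a1^2+b1^2)/2 := by positivity
    nlinarith
  have d2 : |t2| * (a2^2+b2^2)/2 ≤ M * (a2^2+b2^2)/2 := by
    have : (0:ℝ) ≤ (a2^2+b2^2)/2 := by positivity
    nlinarith
  have d3 : |t3| * (a3^2+b3^2)/2 ≤ M * (a3^2+b3^2)/2 := by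
    have : (0:ℝ) ≤ (a3^2+b3^2)/2 := by positivity
    nlinarith
  have hsum : M * (a1^2+b1^2)/2 + M * (a2^2+b2^2)/2 + M * (a3^2+b3^2)/2 = M := by
    linear_combination (M/2) * ha + (M/2) * hb
  linarith

lemma dich_sigma1 : Dichotomic σ1 := by rw [sigma1_eq]; exact dich_Amat 1 0 0 (by norm_num)
lemma dich_sigma2 : Dichotomic σ2 := by rw [sigma2_eq]; exact dich_Amat 0 1 0 (by norm_num)
lemma dich_sigma3 : Dichotomic σ3 := by rw [sigma3_eq]; exact dich_Amat 0 0 1 (by norm_num)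

lemma cor_sigma1 (t1 t2 t3 : ℝ) : Cor (Smat t1 t2 t3) σ1 σ1 = t1 := by
  rw [sigma1_eq, Cor_eval]; ring
lemma cor_sigma2 (t1 t2 t3 : ℝ) : Cor (Smat t1 t2 t3) σ2 σ2 = t2 := by
  rw [sigma2_eq, Cor_eval]; ring
lemma cor_sigma3 (t1 t2 t3 : ℝ) : Cor (Smat t1 t2 t3) σ3 σ3 = t3 := by
  rw [sigma3_eq, Cor_eval]; ring

lemma pairSup_eq (t1 t2 t3 : ℝ) :
    sSup {x : ℝ | ∃ A B : M2, Dichotomic A ∧ Dichotomic B ∧ x = |Cor (Smat t1 t2 t3) A B|}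
      = max (max |t1| |t2|) |t3| := by
  set S := {x : ℝ | ∃ A B : M2, Dichotomic A ∧ Dichotomic B ∧ x = |Cor (Smat t1 t2 t3) A B|}
    with hS
  have hub : ∀ x ∈ S, x ≤ max (max |t1| |t2|) |t3| := by
    rintro x ⟨A, B, hA, hB, rfl⟩
    obtain ⟨a1, a2, a3, ha, rfl⟩ := dich_char hA
    obtain ⟨b1, b2, b3, hb, rfl⟩ := dich_char hB
    rw [Cor_eval]
    exact pair_ub t1 t2 t3 a1 a2 a3 b1 b2 b3 ha hb
  have h1 : |t1| ∈ S := ⟨σ1, σ1, dich_sigma1, dich_sigma1, by rw [cor_sigma1]⟩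
  have h2 : |t2| ∈ S := ⟨σ2, σ2, dich_sigma2, dich_sigma2, by rw [cor_sigma2]⟩
  have h3 : |t3| ∈ S := ⟨σ3, σ3, dich_sigma3, dich_sigma3, by rw [cor_sigma3]⟩
  have hbdd : BddAbove S := ⟨_, hub⟩
  apply le_antisymm (csSup_le ⟨_, h1⟩ hub)
  rcases max_cases (max |t1| |t2|) |t3| with ⟨he, _⟩ | ⟨he, _⟩
  · rcases max_cases |t1| |t2| with ⟨he2, _⟩ | ⟨he2, _⟩
    · rw [he, he2]; exact le_csSup hbdd h1
    · rw [he, he2]; exact le_csSup hbdd h2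
  · rw [he]; exact le_csSup hbdd h3

lemma triple_ub (t1 t2 t3 : ℝ) {A B : Fin 3 → M2} (hA : ComplementaryTriple A)
    (hB : ComplementaryTriple B) :
    ∑ i : Fin 3, |Cor (Smat t1 t2 t3) (A i) (B i)| ≤ |t1| + |t2| + |t3| := by
  choose ax ay az hau hae using fun i => dich_char (hA.1 i)
  choose bx bY bz hbu hbe using fun i => dich_char (hB.1 i)
  have hoa : ∀ i j, i ≠ j → ax i * ax j + ay i * ay j + az i * az j = 0 := by
    intro i j hij
    have h := hA.2 i j hij
    rw [hae i, hae j, trace_mul_Amat] at h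
    have h2 : (2*(ax i * ax j + ay i * ay j + az i * az j) : ℝ) = 0 := by exact_mod_cast h
    linarith
  have hob : ∀ i j, i ≠ j → bx i * bx j + bY i * bY j + bz i * bz j = 0 := by
    intro i j hij
    have h := hB.2 i j hij
    rw [hbe i, hbe j, trace_mul_Amat] at h
    have h2 : (2*(bx i * bx j + bY i * bY j + bz i * bz j) : ℝ) = 0 := by exact_mod_cast h
    linarith
  obtain ⟨ca1, ca2, ca3⟩ := col_sums ax ay az hau hoa
  obtain ⟨cb1, cb2, cb3⟩ := col_sums bx bY bz hbu hob
  have key : ∀ i, |Cor (Smat t1 t2 t3) (A i) (B i)| ≤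
      |t1| * ((ax i)^2 + (bx i)^2)/2 + |t2| * ((ay i)^2 + (bY i)^2)/2
        + |t3| * ((az i)^2 + (bz i)^2)/2 := by
    intro i
    rw [hae i, hbe i, Cor_eval]
    have c1 := term_bound_s11 t1 (ax i) (bx i)
    have c2 := term_bound_s11 t2 (ay i) (bY i)
    have c3 := term_bound_s11 t3 (az i) (bz i)
    have habs := abs_add_three (t1 * ax i * bx i) (t2 * ay i * bY i) (t3 * az i * bz i)
    linarith
  have k0 := key 0
  have k1 := key 1
  have k2 := key 2
  rw [Fin.sum_univ_three]
  have hfin : |t1| * ((ax 0)^2 + (bx 0)^2)/2 + |t2| * ((ay 0)^2 + (bY 0)^2)/2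
        + |t3| * ((az 0)^2 + (bz 0)^2)/2
      + (|t1| * ((ax 1)^2 + (bx 1)^2)/2 + |t2| * ((ay 1)^2 + (bY 1)^2)/2
        + |t3| * ((az 1)^2 + (bz 1)^2)/2)
      + (|t1| * ((ax 2)^2 + (bx 2)^2)/2 + |t2| * ((ay 2)^2 + (bY 2)^2)/2
        + |t3| * ((az 2)^2 + (bz 2)^2)/2) = |t1| + |t2| + |t3| := by
    linear_combination (|t1|/2) * ca1 + (|t1|/2) * cb1 + (|t2|/2) * ca2 + (|t2|/2) * cb2
      + (|t3|/2) * ca3 + (|t3|/2) * cb3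
  linarith

lemma tripleSup_eq (t1 t2 t3 : ℝ) :
    sSup {x : ℝ | ∃ A B : Fin 3 → M2, ComplementaryTriple A ∧ ComplementaryTriple B ∧
        x = ∑ i : Fin 3, |Cor (Smat t1 t2 t3) (A i) (B i)|}
      = |t1| + |t2| + |t3| := by
  set S := {x : ℝ | ∃ A B : Fin 3 → M2, ComplementaryTriple A ∧ ComplementaryTriple B ∧
      x = ∑ i : Fin 3, |Cor (Smat t1 t2 t3) (A i) (B i)|} with hS
  have hub : ∀ x ∈ S, x ≤ |t1| + |t2| + |t3| := by
    rintro x ⟨A, B, hA, hB, rfl⟩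
    exact triple_ub t1 t2 t3 hA hB
  have hmem : (|t1| + |t2| + |t3|) ∈ S := by
    refine ⟨pauli, pauli, pauli_complementary, pauli_complementary, ?_⟩
    rw [Fin.sum_univ_three]
    have e0 : pauli 0 = σ1 := rfl
    have e1 : pauli 1 = σ2 := rfl
    have e2 : pauli 2 = σ3 := rfl
    rw [e0, e1, e2, cor_sigma1, cor_sigma2, cor_sigma3]
  exact le_antisymm (csSup_le ⟨_, hmem⟩ hub) (le_csSup ⟨_, hub⟩ hmem)

lemma arith_iff (t1 t2 t3 : ℝ) (hne : ¬ (t1 = 0 ∧ t2 = 0 ∧ t3 = 0)) :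
    (|t1| + |t2| + |t3| = max (max |t1| |t2|) |t3|
      ↔ ((t1 ≠ 0 ∧ t2 = 0 ∧ t3 = 0) ∨ (t1 = 0 ∧ t2 ≠ 0 ∧ t3 = 0) ∨
         (t1 = 0 ∧ t2 = 0 ∧ t3 ≠ 0))) := by
  have n1 := abs_nonneg t1
  have n2 := abs_nonneg t2
  have n3 := abs_nonneg t3
  constructor
  · intro h
    rcases max_cases (max |t1| |t2|) |t3| with ⟨he, _⟩ | ⟨he, _⟩
    · rcases max_cases |t1| |t2| with ⟨he2, _⟩ | ⟨he2, _⟩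
      · rw [he, he2] at h
        have h2 : t2 = 0 := abs_eq_zero.mp (by linarith)
        have h3 : t3 = 0 := abs_eq_zero.mp (by linarith)
        have h1 : t1 ≠ 0 := fun h1 => hne ⟨h1, h2, h3⟩
        exact Or.inl ⟨h1, h2, h3⟩
      · rw [he, he2] at h
        have h1 : t1 = 0 := abs_eq_zero.mp (by linarith)
        have h3 : t3 = 0 := abs_eq_zero.mp (by linarith)
        have h2 : t2 ≠ 0 := fun h2 => hne ⟨h1, h2, h3⟩
        exact Or.inr (Or.inl ⟨h1, h2, h3⟩)
    · rw [he] at h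
      have h1 : t1 = 0 := abs_eq_zero.mp (by linarith)
      have h2 : t2 = 0 := abs_eq_zero.mp (by linarith)
      have h3 : t3 ≠ 0 := fun h3 => hne ⟨h1, h2, h3⟩
      exact Or.inr (Or.inr ⟨h1, h2, h3⟩)
  · rintro (⟨h1, h2, h3⟩ | ⟨h1, h2, h3⟩ | ⟨h1, h2, h3⟩)
    · subst h2; subst h3
      simp [max_eq_left, abs_nonneg]
    · subst h1; subst h3
      simp [max_eq_left, max_eq_right, abs_nonneg]
    · subst h1; subst h2
      simp [max_eq_right, abs_nonneg]

/-- Theorem 2: for a standard-form two-qubit state with (t₁,t₂,t₃) ≠ 0, the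
supremum of total correlations over pairs of complementary triples equals the supremum of
the single-pair PCC over pairs of dichotomic observables if and only if exactly one of
t₁, t₂, t₃ is nonzero (i.e., iff the state is classically correlated). Equivalently,
`|t₁| + |t₂| + |t₃| = max{|t₁|,|t₂|,|t₃|}` iff exactly one tᵢ is nonzero. -/
theorem standard_form_classical_iff_concentration (t1 t2 t3 : ℝ) (Ssf : M4)
    (hform : Ssf = (1/4 : ℂ) • ((1 : M2) ⊗ₖ (1 : M2)
      + (t1 : ℂ) • (σ1 ⊗ₖ σ1) + (t2 : ℂ) • (σ2 ⊗ₖ σ2) + (t3 : ℂ) • (σ3 ⊗ₖ σ3)))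
    (hpsd : Ssf.PosSemidef) (hne : ¬ (t1 = 0 ∧ t2 = 0 ∧ t3 = 0)) :
    (sSup {x : ℝ | ∃ A B : Fin 3 → M2, ComplementaryTriple A ∧ ComplementaryTriple B ∧
          x = ∑ i : Fin 3, |Cor Ssf (A i) (B i)|}
        = sSup {x : ℝ | ∃ A B : M2, Dichotomic A ∧ Dichotomic B ∧ x = |Cor Ssf A B|}
      ↔ ((t1 ≠ 0 ∧ t2 = 0 ∧ t3 = 0) ∨ (t1 = 0 ∧ t2 ≠ 0 ∧ t3 = 0) ∨
         (t1 = 0 ∧ t2 = 0 ∧ t3 ≠ 0))) ∧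
    (|t1| + |t2| + |t3| = max (max |t1| |t2|) |t3|
      ↔ ((t1 ≠ 0 ∧ t2 = 0 ∧ t3 = 0) ∨ (t1 = 0 ∧ t2 ≠ 0 ∧ t3 = 0) ∨
         (t1 = 0 ∧ t2 = 0 ∧ t3 ≠ 0))) := by
  have hform' : Ssf = Smat t1 t2 t3 := hform
  subst hform'
  refine ⟨?_, arith_iff t1 t2 t3 hne⟩
  rw [tripleSup_eq, pairSup_eq]
  exact arith_iff t1 t2 t3 hne
end
end

section
/- Let S be a two-qubit state (4×4 positive semidefinite matrix with trace 1). Define the real Bloch vectors n, s ∈ ℝ³ by n_k = tr(S·(σ_k⊗I₂)) and s_ℓ = tr(S·(I₂⊗σ_ℓ)), and the real 3×3 matrix C by C_{kℓ} = tr(S·(σ_k⊗σ_ℓ)) − n_k·s_ℓ. Assume ‖n‖² < 1 and ‖s‖² < 1 (Euclidean norms). Then for every pair of dichotomic observables A and B, |Cor_S(A, B)| ≤ ‖C‖₂ / (√(1 − ‖n‖²)·√(1 − ‖s‖²)), where ‖C‖₂ denotes the spectral norm (largest singular value, equivalently the ℓ²→ℓ² operator norm) of C. -/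
/-! A dichotomic observable is `a · σ` for a unit vector `a ∈ ℝ³`. By bilinearity of the
expectation, `Cov_S(a · σ, b · σ) = aᵀ C b`, which is at most `‖C‖₂` in absolute value for unit
`a`, `b`; and `V_S(a · σ) = 1 - (a · n)² ≥ 1 - ‖n‖²` by Cauchy–Schwarz, likewise for `b · σ`. -/

open Matrix Complex
open scoped Kronecker ComplexConjugate ComplexOrder

noncomputable section

open scoped Matrix.Norms.L2Operator

lemma EE_add_left (S : M4) (A A' B : M2) : EE S (A + A') B = EE S A B + EE S A' B := by
  simp [EE, Matrix.add_kronecker, Matrix.mul_add]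

lemma EE_smul_left (S : M4) (r : ℝ) (A B : M2) : EE S ((r : ℂ) • A) B = r * EE S A B := by
  simp [EE, Matrix.smul_kronecker, Complex.real_smul]

lemma EE_add_right (S : M4) (A B B' : M2) : EE S A (B + B') = EE S A B + EE S A B' := by
  simp [EE, Matrix.kronecker_add, Matrix.mul_add]

lemma EE_smul_right (S : M4) (r : ℝ) (A B : M2) : EE S A ((r : ℂ) • B) = r * EE S A B := by
  simp [EE, Matrix.kronecker_smul, Complex.real_smul]

lemma EE_sum_smul_left {ι : Type*} [Fintype ι] (S : M4) (a : ι → ℝ) (X : ι → M2) (B : M2) :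
    EE S (∑ i, (a i : ℂ) • X i) B = ∑ i, a i * EE S (X i) B := by
  simpa only [AddMonoidHom.mk'_apply, EE_smul_left] using
    map_sum (AddMonoidHom.mk' (EE S · B) (EE_add_left S · · B)) (fun i => (a i : ℂ) • X i) .univ

lemma EE_sum_smul_right {ι : Type*} [Fintype ι] (S : M4) (A : M2) (b : ι → ℝ) (Y : ι → M2) :
    EE S A (∑ i, (b i : ℂ) • Y i) = ∑ i, b i * EE S A (Y i) := by
  simpa only [AddMonoidHom.mk'_apply, EE_smul_right] using
    map_sum (AddMonoidHom.mk' (EE S A) (EE_add_right S A)) (fun i => (b i : ℂ) • Y i) .univ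

lemma Cov_sum_smul_eq_dotProduct_mulVec {m n : Type*} [Fintype m] [Fintype n] (S : M4)
    (X : m → M2) (Y : n → M2) (C : Matrix m n ℝ) (hC : ∀ i j, C i j = Cov S (X i) (Y j))
    (a : m → ℝ) (b : n → ℝ) :
    Cov S (∑ i, (a i : ℂ) • X i) (∑ j, (b j : ℂ) • Y j) = a ⬝ᵥ C *ᵥ b := by
  simp only [Cov, EE_sum_smul_left]
  simp only [EE_sum_smul_right, hC, dotProduct, mulVec]
  rw [Finset.sum_mul_sum, ← Finset.sum_sub_distrib]
  refine Finset.sum_congr rfl fun i _ => ?_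
  rw [Finset.mul_sum, Finset.mul_sum, ← Finset.sum_sub_distrib]
  exact Finset.sum_congr rfl fun j _ => by rw [Cov]; ring

lemma Dichotomic.exists_bloch {A : M2} (hA : Dichotomic A) :
    ∃ a : Fin 3 → ℝ, ∑ k, a k ^ 2 = 1 ∧ A = ∑ k, (a k : ℂ) • pauli k := by
  obtain ⟨hH, hsq, htr⟩ := hA
  have h00 : (A 0 0).im = 0 := by
    simpa only [RCLike.star_def, conj_eq_iff_im] using hH.apply 0 0
  have h11 : A 1 1 = -A 0 0 := by
    have : A 0 0 + A 1 1 = 0 := by simpa only [trace, diag_apply, Fin.sum_univ_two] using htr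
    linear_combination this
  have h10 : A 1 0 = conj (A 0 1) := (hH.apply 1 0).symm
  refine ⟨![(A 0 1).re, -(A 0 1).im, (A 0 0).re], ?_, ?_⟩
  · have hsq00 := congrArg Complex.re (congrFun (congrFun hsq 0) 0)
    simp only [Matrix.mul_apply, Fin.sum_univ_two, one_apply_eq, h10, add_re, mul_re, h00,
      conj_re, conj_im, one_re] at hsq00
    simp only [Fin.sum_univ_three, cons_val_zero, cons_val_one, cons_val, even_two, Even.neg_pow]
    linarith
  · ext i j
    fin_cases i <;> fin_cases j <;>
      simp [Fin.sum_univ_three, pauli, σ1, σ2, σ3, h11, h10] <;>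
      apply Complex.ext <;>
      simp [h00]

lemma dotProduct_sq_le_sum_sq {ι : Type*} [Fintype ι] {a : ι → ℝ} (ha : ∑ i, a i ^ 2 = 1)
    (v : ι → ℝ) : (a ⬝ᵥ v) ^ 2 ≤ ∑ i, v i ^ 2 := by
  simpa [dotProduct, ha] using Finset.sum_mul_sq_le_sq_mul_sq Finset.univ a v

lemma abs_dotProduct_mulVec_le_l2_opNorm {m n : Type*} [Fintype m] [Fintype n] [DecidableEq n]
    (C : Matrix m n ℝ) {a : m → ℝ} {b : n → ℝ} (ha : ∑ i, a i ^ 2 = 1)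
    (hb : ∑ j, b j ^ 2 = 1) : |a ⬝ᵥ C *ᵥ b| ≤ ‖C‖ := by
  have ha' : ‖WithLp.toLp 2 a‖ = 1 := by simp [EuclideanSpace.norm_eq, ha]
  have hb' : ‖WithLp.toLp 2 b‖ = 1 := by simp [EuclideanSpace.norm_eq, hb]
  calc |a ⬝ᵥ C *ᵥ b| = |inner ℝ (WithLp.toLp 2 a) (WithLp.toLp 2 (C *ᵥ b))| := by
        rw [EuclideanSpace.inner_toLp_toLp, dotProduct_comm]; rfl
    _ ≤ ‖WithLp.toLp 2 a‖ * ‖WithLp.toLp 2 (C *ᵥ b)‖ := abs_real_inner_le_norm _ _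
    _ ≤ 1 * (‖C‖ * ‖WithLp.toLp 2 b‖) := by
        rw [ha']; exact mul_le_mul_of_nonneg_left (C.l2_opNorm_mulVec (WithLp.toLp 2 b)) zero_le_one
    _ = ‖C‖ := by rw [hb', one_mul, mul_one]

lemma abs_Cor_le {S : M4} {A B : M2} {c v w : ℝ} (hCov : |Cov S A B| ≤ c) (hv : 0 < v)
    (hw : 0 < w) (hVar1 : v ≤ Var1 S A) (hVar2 : w ≤ Var2 S B) :
    |Cor S A B| ≤ c / (Real.sqrt v * Real.sqrt w) := by
  rw [Cor, abs_div, abs_of_nonneg (Real.sqrt_nonneg _), ← Real.sqrt_mul hv.le]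
  exact div_le_div₀ ((abs_nonneg _).trans hCov) hCov (by positivity)
    (Real.sqrt_le_sqrt (mul_le_mul hVar1 hVar2 hw.le (hv.le.trans hVar1)))

theorem pcc_spectral_norm_bound_general (S : M4)
    (n s : Fin 3 → ℝ) (C : Matrix (Fin 3) (Fin 3) ℝ)
    (hn : ∀ k, n k = EE S (pauli k) 1)
    (hs : ∀ l, s l = EE S 1 (pauli l))
    (hC : ∀ k l, C k l = EE S (pauli k) (pauli l) - n k * s l)
    (hnorm_n : ∑ k : Fin 3, (n k) ^ 2 < 1)
    (hnorm_s : ∑ l : Fin 3, (s l) ^ 2 < 1) :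
    ∀ A B : M2, Dichotomic A → Dichotomic B →
      |Cor S A B| ≤ ‖C‖ /
        (Real.sqrt (1 - ∑ k : Fin 3, (n k) ^ 2) * Real.sqrt (1 - ∑ l : Fin 3, (s l) ^ 2)) := by
  intro A B hA hB
  obtain ⟨a, ha, rfl⟩ := hA.exists_bloch
  obtain ⟨b, hb, rfl⟩ := hB.exists_bloch
  have hCov : Cov S (∑ k, (a k : ℂ) • pauli k) (∑ l, (b l : ℂ) • pauli l) = a ⬝ᵥ C *ᵥ b :=
    Cov_sum_smul_eq_dotProduct_mulVec S pauli pauli C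
      (fun k l => by rw [hC, hn, hs, Cov]) a b
  have hVar1 : 1 - ∑ k, n k ^ 2 ≤ Var1 S (∑ k, (a k : ℂ) • pauli k) := by
    have hE : EE S (∑ k, (a k : ℂ) • pauli k) 1 = a ⬝ᵥ n := by
      simp only [EE_sum_smul_left, dotProduct, hn]
    rw [Var1, hE]
    linarith [dotProduct_sq_le_sum_sq ha n]
  have hVar2 : 1 - ∑ l, s l ^ 2 ≤ Var2 S (∑ l, (b l : ℂ) • pauli l) := by
    have hE : EE S 1 (∑ l, (b l : ℂ) • pauli l) = b ⬝ᵥ s := by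
      simp only [EE_sum_smul_right, dotProduct, hs]
    rw [Var2, hE]
    linarith [dotProduct_sq_le_sum_sq hb s]
  exact abs_Cor_le (hCov ▸ abs_dotProduct_mulVec_le_l2_opNorm C ha hb)
    (by linarith) (by linarith) hVar1 hVar2

/-- spectral-norm bound for the PCC. With Bloch vectors n, s and correlation
matrix C_{kℓ} = tr(S(σ_k⊗σ_ℓ)) − n_k s_ℓ, if ‖n‖² < 1 and ‖s‖² < 1 then for all dichotomic
A, B: `|Cor_S(A,B)| ≤ ‖C‖₂ / (√(1−‖n‖²)·√(1−‖s‖²))`, where ‖C‖₂ is the ℓ²→ℓ² operator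
(spectral) norm. -/
theorem pcc_spectral_norm_bound (S : M4) (hpsd : S.PosSemidef) (htr : S.trace = 1)
    (n s : Fin 3 → ℝ) (C : Matrix (Fin 3) (Fin 3) ℝ)
    (hn : ∀ k, n k = EE S (pauli k) 1)
    (hs : ∀ l, s l = EE S 1 (pauli l))
    (hC : ∀ k l, C k l = EE S (pauli k) (pauli l) - n k * s l)
    (hnorm_n : ∑ k : Fin 3, (n k) ^ 2 < 1)
    (hnorm_s : ∑ l : Fin 3, (s l) ^ 2 < 1) :
    ∀ A B : M2, Dichotomic A → Dichotomic B →
      |Cor S A B| ≤ ‖C‖ /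
        (Real.sqrt (1 - ∑ k : Fin 3, (n k) ^ 2) * Real.sqrt (1 - ∑ l : Fin 3, (s l) ^ 2)) :=
  pcc_spectral_norm_bound_general S n s C hn hs hC hnorm_n hnorm_s
end
end

section
/- Let T be a real 3×3 diagonal matrix with diagonal entries t₁, t₂, t₃, and let (a₁,a₂,a₃) and (b₁,b₂,b₃) each be orthonormal bases of ℝ³. Then Σ_{i=1}^{3} |⟨aᵢ, T·bᵢ⟩| ≤ |t₁| + |t₂| + |t₃|, i.e., the sum of absolute matched matrix elements of T across any pair of orthonormal frames is bounded by the trace norm (sum of singular values) of T. -/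
open Matrix

noncomputable section

/-- Columns of a matrix with orthonormal rows are orthonormal. -/
lemma col_norm_one (a : Fin 3 → Fin 3 → ℝ)
    (ha : ∀ i k, ∑ j : Fin 3, a i j * a k j = if i = k then 1 else 0) :
    ∀ j : Fin 3, ∑ i : Fin 3, a i j * a i j = 1 := by
  intro j
  let A : Matrix (Fin 3) (Fin 3) ℝ := Matrix.of a
  have hAAt : A * Aᵀ = 1 := by
    ext i k
    simp [A, Matrix.mul_apply, Matrix.one_apply, ha i k]
  have hAtA : Aᵀ * A = 1 := mul_eq_one_comm.mp hAAt
  have := congrFun (congrFun hAtA j) j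
  simpa [A, Matrix.mul_apply, Matrix.one_apply] using this

lemma col_cs (a b : Fin 3 → Fin 3 → ℝ)
    (ha : ∀ i k, ∑ j : Fin 3, a i j * a k j = if i = k then 1 else 0)
    (hb : ∀ i k, ∑ j : Fin 3, b i j * b k j = if i = k then 1 else 0)
    (j : Fin 3) : ∑ i : Fin 3, |a i j| * |b i j| ≤ 1 := by
  have hcs := Finset.sum_mul_sq_le_sq_mul_sq Finset.univ
    (fun i => |a i j|) (fun i => |b i j|)
  have h1 : ∑ i : Fin 3, |a i j| ^ 2 = 1 := by
    simpa [sq_abs, sq] using col_norm_one a ha j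
  have h2 : ∑ i : Fin 3, |b i j| ^ 2 = 1 := by
    simpa [sq_abs, sq] using col_norm_one b hb j
  have hnn : (0:ℝ) ≤ ∑ i : Fin 3, |a i j| * |b i j| :=
    Finset.sum_nonneg fun i _ => mul_nonneg (abs_nonneg _) (abs_nonneg _)
  rw [h1, h2] at hcs
  nlinarith [hcs, hnn]

/-- for a real diagonal 3×3 matrix T = diag(t₁,t₂,t₃) and orthonormal bases
(a₁,a₂,a₃), (b₁,b₂,b₃) of ℝ³, the sum of absolute matched matrix elements satisfies
`Σᵢ |⟨aᵢ, T·bᵢ⟩| ≤ |t₁| + |t₂| + |t₃|` (the trace norm of T). -/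
theorem diagonal_matched_elements_trace_norm_bound (t : Fin 3 → ℝ)
    (a b : Fin 3 → Fin 3 → ℝ)
    (ha : ∀ i k, ∑ j : Fin 3, a i j * a k j = if i = k then 1 else 0)
    (hb : ∀ i k, ∑ j : Fin 3, b i j * b k j = if i = k then 1 else 0) :
    ∑ i : Fin 3, |a i ⬝ᵥ (Matrix.diagonal t).mulVec (b i)| ≤ |t 0| + |t 1| + |t 2| := by
  have key : ∑ i : Fin 3, |a i ⬝ᵥ (Matrix.diagonal t).mulVec (b i)|
      ≤ ∑ j : Fin 3, |t j| * ∑ i : Fin 3, |a i j| * |b i j| := by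
    have step : ∀ i : Fin 3, |a i ⬝ᵥ (Matrix.diagonal t).mulVec (b i)|
        ≤ ∑ j : Fin 3, |t j| * (|a i j| * |b i j|) := by
      intro i
      have : a i ⬝ᵥ (Matrix.diagonal t).mulVec (b i)
          = ∑ j : Fin 3, a i j * (t j * b i j) := by
        simp [dotProduct, Matrix.mulVec_diagonal]
      rw [this]
      refine (Finset.abs_sum_le_sum_abs _ _).trans ?_
      refine Finset.sum_le_sum fun j _ => ?_
      rw [abs_mul, abs_mul]
      ring_nf
      exact le_of_eq (by ring)
    calc ∑ i : Fin 3, |a i ⬝ᵥ (Matrix.diagonal t).mulVec (b i)|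
        ≤ ∑ i : Fin 3, ∑ j : Fin 3, |t j| * (|a i j| * |b i j|) :=
          Finset.sum_le_sum fun i _ => step i
      _ = ∑ j : Fin 3, |t j| * ∑ i : Fin 3, |a i j| * |b i j| := by
          rw [Finset.sum_comm]; simp [Finset.mul_sum]
  refine key.trans ?_
  have : ∑ j : Fin 3, |t j| * ∑ i : Fin 3, |a i j| * |b i j|
      ≤ ∑ j : Fin 3, |t j| * 1 :=
    Finset.sum_le_sum fun j _ =>
      mul_le_mul_of_nonneg_left (col_cs a b ha hb j) (abs_nonneg _)
  refine this.trans ?_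
  simp [Fin.sum_univ_three]
end
end
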